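/- arXiv:2308.00796 — 12 statements merged into one kernel-verified Lean document; each statement's English description precedes it below -/
import Mathlib

section
/- Let d be a divisor of n with 1 < d < n. If n divides d², then Ω_d is a clique in the zero-divisor graph Γ(Z_n); if n does not divide d², then Ω_d is an independent set in Γ(Z_n). -/
/-! Whether `x * y = 0` in `ZMod n` depends only on `gcd(x, n)` and `gcd(y, n)`:
`n ∣ x * y` iff `n ∣ gcd(x, n) * gcd(y, n)`. On `Ω_d` both gcds equal `d`, so either every
product of two elements of `Ω_d` vanishes (`n ∣ d²`) or none does. -/

/-- The nonzero zero-divisors of `ZMod n`, the vertex set of the zero-divisor graph. -/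
abbrev Zdv (n : ℕ) : Type := {x : ZMod n // x ≠ 0 ∧ ∃ y : ZMod n, y ≠ 0 ∧ x * y = 0}

/-- The zero-divisor graph of `ZMod n`: distinct nonzero zero-divisors `x, y` adjacent iff `x*y = 0`. -/
def zdg (n : ℕ) : SimpleGraph (Zdv n) :=
  SimpleGraph.fromRel (fun x y => x.1 * y.1 = 0)

namespace ZMod

theorem mul_eq_zero_iff_dvd_val_mul_val {n : ℕ} (a b : ZMod n) :
    a * b = 0 ↔ n ∣ a.val * b.val := by
  rw [← val_eq_zero, val_mul, Nat.dvd_iff_mod_eq_zero]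

theorem mul_eq_zero_iff_dvd_sq_of_gcd_val_eq {n d : ℕ} {a b : ZMod n}
    (ha : a.val.gcd n = d) (hb : b.val.gcd n = d) : a * b = 0 ↔ n ∣ d ^ 2 := by
  rw [mul_eq_zero_iff_dvd_val_mul_val, ← Nat.dvd_gcd_mul_gcd_iff_dvd_mul, Nat.gcd_comm,
    Nat.gcd_comm n, ha, hb, sq]

end ZMod

theorem omega_clique_or_indep_general (n d : ℕ) :
    (n ∣ d ^ 2 → (zdg n).IsClique {x : Zdv n | Nat.gcd x.1.val n = d}) ∧
    (¬ n ∣ d ^ 2 → ∀ x ∈ {x : Zdv n | Nat.gcd x.1.val n = d},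
      ∀ y ∈ {x : Zdv n | Nat.gcd x.1.val n = d}, ¬ (zdg n).Adj x y) := by
  constructor
  · intro hd x hx y hy hxy
    exact (SimpleGraph.fromRel_adj _ x y).2
      ⟨hxy, .inl ((ZMod.mul_eq_zero_iff_dvd_sq_of_gcd_val_eq hx hy).2 hd)⟩
  · intro hd x hx y hy hxy
    obtain ⟨-, hxy | hyx⟩ := (SimpleGraph.fromRel_adj _ x y).1 hxy
    · exact hd ((ZMod.mul_eq_zero_iff_dvd_sq_of_gcd_val_eq hx hy).1 hxy)
    · exact hd ((ZMod.mul_eq_zero_iff_dvd_sq_of_gcd_val_eq hy hx).1 hyx)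

theorem omega_clique_or_indep (n d : ℕ) (hdn : d ∣ n) (h1 : 1 < d) (h2 : d < n) :
    (n ∣ d ^ 2 → (zdg n).IsClique {x : Zdv n | Nat.gcd x.1.val n = d}) ∧
    (¬ n ∣ d ^ 2 → ∀ x ∈ {x : Zdv n | Nat.gcd x.1.val n = d},
      ∀ y ∈ {x : Zdv n | Nat.gcd x.1.val n = d}, ¬ (zdg n).Adj x y) :=
  omega_clique_or_indep_general n d
end

section
/- Let d be a proper divisor of n (1 < d < n) and x ∈ Ω_d. Then the degree of x in the zero-divisor graph Γ(Z_n) equals d − 2 if n divides d², and d − 1 otherwise. -/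
theorem omega_degree (n d : ℕ) (hdn : d ∣ n) (h1 : 1 < d) (h2 : d < n)
    (x : Zdv n) (hx : Nat.gcd x.1.val n = d) :
    ((zdg n).neighborSet x).ncard = if n ∣ d ^ 2 then d - 2 else d - 1 := by
  haveI : NeZero n := ⟨by omega⟩
  obtain ⟨m, hm⟩ := hdn
  have hd0 : 0 < d := by omega
  have hn0 : 0 < n := by omega
  have hm0 : 0 < m := by
    rcases Nat.eq_zero_or_pos m with h | h
    · subst h; omega
    · exact h
  have hmn : m ∣ n := ⟨d, by rw [hm, Nat.mul_comm]⟩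
  have hda : d ∣ x.1.val := hx ▸ Nat.gcd_dvd_left _ _
  obtain ⟨u, hu⟩ := hda
  have hcop : Nat.Coprime u m := by
    have h := Nat.coprime_div_gcd_div_gcd (m := x.1.val) (n := n) (by rw [hx]; exact hd0)
    rw [hx, hu, Nat.mul_div_cancel_left _ hd0, hm, Nat.mul_div_cancel_left _ hd0] at h
    exact h
  have ha0 : x.1.val ≠ 0 := fun h => x.2.1 (by rwa [ZMod.val_eq_zero] at h)
  -- key: annihilation iff divisibility by m
  have keyA : ∀ z : ZMod n, x.1 * z = 0 ↔ m ∣ z.val := by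
    intro z
    have e : x.1 * z = ((x.1.val * z.val : ℕ) : ZMod n) := by
      rw [Nat.cast_mul, ZMod.natCast_zmod_val, ZMod.natCast_zmod_val]
    rw [e, ZMod.natCast_eq_zero_iff, hu]
    constructor
    · intro h
      have h' : d * m ∣ d * (u * z.val) := by rw [← mul_assoc, ← hm]; exact h
      exact Nat.Coprime.dvd_of_dvd_mul_left hcop.symm
        ((Nat.mul_dvd_mul_iff_left hd0).mp h')
    · intro h
      have h' : d * m ∣ d * (u * z.val) :=
        Nat.mul_dvd_mul_left d (Dvd.dvd.mul_left h u)
      rw [← hm] at h'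
      rw [mul_assoc]
      exact h'
  -- the target set in ZMod n
  set T : Set (ZMod n) := {z : ZMod n | z ≠ 0 ∧ z ≠ x.1 ∧ x.1 * z = 0} with hT
  have him : Subtype.val '' ((zdg n).neighborSet x) = T := by
    ext z
    constructor
    · rintro ⟨y, hy, rfl⟩
      simp only [SimpleGraph.mem_neighborSet, zdg, SimpleGraph.fromRel_adj] at hy
      obtain ⟨hne, h0⟩ := hy
      refine ⟨y.2.1, fun h => hne (Subtype.ext h.symm), ?_⟩
      rcases h0 with h | h
      · rwa [mul_comm] at h ⊢
      · rwa [mul_comm] at h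
    · rintro ⟨hz0, hzx, hzz⟩
      refine ⟨⟨z, hz0, ⟨x.1, x.2.1, by rwa [mul_comm] at hzz⟩⟩, ?_, rfl⟩
      simp only [SimpleGraph.mem_neighborSet, zdg, SimpleGraph.fromRel_adj]
      exact ⟨fun h => hzx (congrArg Subtype.val h.symm), Or.inl hzz⟩
  have hcard : ((zdg n).neighborSet x).ncard = T.ncard := by
    rw [← him, Set.ncard_image_of_injective _ Subtype.val_injective]
  rw [hcard]
  -- the finset of multiples of m
  set F : Finset (ZMod n) := (Finset.range d).image (fun k => ((m * k : ℕ) : ZMod n)) with hF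
  have hinj : Set.InjOn (fun k => ((m * k : ℕ) : ZMod n)) (Finset.range d) := by
    intro k₁ hk₁ k₂ hk₂ he
    simp only [Finset.coe_range, Set.mem_Iio] at hk₁ hk₂
    have l₁ : m * k₁ < n := by nlinarith
    have l₂ : m * k₂ < n := by nlinarith
    have := congrArg ZMod.val he
    rw [ZMod.val_cast_of_lt l₁, ZMod.val_cast_of_lt l₂] at this
    exact Nat.eq_of_mul_eq_mul_left hm0 this
  have hmemF : ∀ z : ZMod n, z ∈ F ↔ m ∣ z.val := by
    intro z
    constructor
    · intro hz
      simp only [hF, Finset.mem_image] at hz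
      obtain ⟨k, hk, rfl⟩ := hz
      simp only [Finset.mem_range] at hk
      rw [ZMod.val_cast_of_lt (by nlinarith)]
      exact ⟨k, rfl⟩
    · rintro ⟨k, hk⟩
      simp only [hF, Finset.mem_image]
      refine ⟨k, ?_, ?_⟩
      · simp only [Finset.mem_range]
        have := ZMod.val_lt z
        by_contra hcon
        push_neg at hcon
        nlinarith
      · rw [← hk, ZMod.natCast_zmod_val]
  have hcardF : F.card = d := by
    rw [hF, Finset.card_image_of_injOn hinj, Finset.card_range]
  have h0F : (0 : ZMod n) ∈ F := by
    rw [hmemF]; simp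
  -- condition equivalence
  have hdd : (n ∣ d ^ 2) ↔ m ∣ d := by
    rw [pow_two]
    constructor
    · intro h
      exact (Nat.mul_dvd_mul_iff_left hd0).mp (by rw [← hm]; exact h)
    · intro h
      have h' := Nat.mul_dvd_mul_left d h
      rw [← hm] at h'
      exact h'
  have hcond : (n ∣ d ^ 2) ↔ m ∣ x.1.val := by
    rw [hdd]
    constructor
    · intro h; exact h.trans ⟨u, hu⟩
    · intro h; rw [← hx]; exact Nat.dvd_gcd h hmn
  by_cases hc : n ∣ d ^ 2
  · rw [if_pos hc]
    have hxF : x.1 ∈ F := (hmemF _).mpr (hcond.mp hc)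
    have hTeq : T = ↑((F.erase 0).erase x.1) := by
      ext z
      simp only [hT, Set.mem_setOf_eq, Finset.coe_erase, Set.mem_diff,
        Finset.mem_coe, Finset.mem_erase, Set.mem_singleton_iff, keyA, hmemF]
      tauto
    rw [hTeq, Set.ncard_coe_finset,
      Finset.card_erase_of_mem (Finset.mem_erase.mpr ⟨fun h => x.2.1 h, hxF⟩),
      Finset.card_erase_of_mem h0F, hcardF]
    omega
  · rw [if_neg hc]
    have hxF : x.1 ∉ F := fun h => hc (hcond.mpr ((hmemF _).mp h))
    have hTeq : T = ↑(F.erase 0) := by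
      ext z
      simp only [hT, Set.mem_setOf_eq, Finset.coe_erase, Set.mem_diff,
        Finset.mem_coe, Finset.mem_erase, Set.mem_singleton_iff, keyA, hmemF]
      constructor
      · tauto
      · rintro ⟨h2', h1'⟩
        exact ⟨h1', fun he => hc (hcond.mpr (he ▸ h2')), h2'⟩
    rw [hTeq, Set.ncard_coe_finset, Finset.card_erase_of_mem h0F, hcardF]
end

section
/- For x, y nonzero zero-divisors of Z_n, deg(x) = deg(y) in the zero-divisor graph Γ(Z_n) if and only if x and y lie in the same set Ω_d for some proper divisor d of n (equivalently, gcd(x, n) = gcd(y, n)). -/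
lemma aux_dvd_mul (a b n : ℕ) (hn : n ≠ 0) :
    n ∣ a * b ↔ n / Nat.gcd a n ∣ b := by
  set g := Nat.gcd a n with hg
  have hg0 : 0 < g := Nat.gcd_pos_of_pos_right a (Nat.pos_of_ne_zero hn)
  have hga : g ∣ a := Nat.gcd_dvd_left a n
  have hgn : g ∣ n := Nat.gcd_dvd_right a n
  have hco : Nat.Coprime (a / g) (n / g) := Nat.coprime_div_gcd_div_gcd hg0
  constructor
  · rintro ⟨k, hk⟩
    have e1 : g * (a / g * b) = g * (n / g * k) := by
      rw [← mul_assoc, ← mul_assoc, Nat.mul_div_cancel' hga, Nat.mul_div_cancel' hgn]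
      exact hk
    have h1 : n / g ∣ a / g * b := ⟨k, Nat.eq_of_mul_eq_mul_left hg0 e1⟩
    exact (hco.symm).dvd_of_dvd_mul_left h1
  · intro h
    have : g * (n / g) ∣ a * b := mul_dvd_mul hga h
    rwa [Nat.mul_div_cancel' hgn] at this

section main

variable (n : ℕ)

lemma zdv_val_ne_zero [NeZero n] (x : Zdv n) : x.1.val ≠ 0 := by
  intro h
  exact x.2.1 ((ZMod.val_eq_zero x.1).mp h)

lemma zdv_one_lt_gcd [NeZero n] (x : Zdv n) : 1 < Nat.gcd x.1.val n := by
  have hg0 : 0 < Nat.gcd x.1.val n :=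
    Nat.gcd_pos_of_pos_right _ (Nat.pos_of_ne_zero (NeZero.ne n))
  rcases Nat.lt_or_ge 1 (Nat.gcd x.1.val n) with h | h
  · exact h
  · exfalso
    have hco : Nat.Coprime x.1.val n := by omega
    have hu : IsUnit x.1 := by
      have := (ZMod.isUnit_iff_coprime x.1.val n).mpr hco
      rwa [ZMod.natCast_rightInverse x.1] at this
    obtain ⟨y, hy0, hxy⟩ := x.2.2
    exact hy0 (hu.mul_left_cancel (by rw [hxy, mul_zero]))

lemma zdv_gcd_lt [NeZero n] (x : Zdv n) : Nat.gcd x.1.val n < n := by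
  have h1 : Nat.gcd x.1.val n ≤ x.1.val :=
    Nat.le_of_dvd (Nat.pos_of_ne_zero (zdv_val_ne_zero n x)) (Nat.gcd_dvd_left _ _)
  exact lt_of_le_of_lt h1 (ZMod.val_lt x.1)

lemma zdv_gcd_dvd (x : Zdv n) : Nat.gcd x.1.val n ∣ n := Nat.gcd_dvd_right _ _

/-- Degree formula. -/
lemma ncard_neighborSet (h1 : 1 < n) (x : Zdv n) :
    ((zdg n).neighborSet x).ncard =
      (if n / Nat.gcd x.1.val n ∣ Nat.gcd x.1.val n then Nat.gcd x.1.val n - 2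
       else Nat.gcd x.1.val n - 1) := by
  haveI : NeZero n := ⟨by omega⟩
  set d := Nat.gcd x.1.val n with hd
  have hd2 : 1 < d := zdv_one_lt_gcd n x
  have hdn : d < n := zdv_gcd_lt n x
  have hddvd : d ∣ n := Nat.gcd_dvd_right _ _
  set m := n / d with hm
  have hmd : m * d = n := Nat.div_mul_cancel hddvd
  have hm0 : 0 < m := Nat.div_pos hdn.le (by omega)
  have hmn : m ∣ n := ⟨d, hmd.symm⟩
  -- adjacency characterization
  have hadj : ∀ y : Zdv n, (zdg n).Adj x y ↔ y ≠ x ∧ m ∣ y.1.val := by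
    intro y
    have hmul : ∀ a b : ZMod n, a * b = 0 ↔ n ∣ a.val * b.val := by
      intro a b
      rw [show a * b = ((a.val * b.val : ℕ) : ZMod n) by
        rw [Nat.cast_mul, ZMod.natCast_rightInverse a, ZMod.natCast_rightInverse b]]
      exact ZMod.natCast_eq_zero_iff _ n
    constructor
    · rintro ⟨hne, h | h⟩
      · refine ⟨Ne.symm hne, ?_⟩
        rw [hmul] at h
        exact (aux_dvd_mul x.1.val y.1.val n (by omega)).mp h
      · refine ⟨Ne.symm hne, ?_⟩
        rw [mul_comm, hmul] at h
        exact (aux_dvd_mul x.1.val y.1.val n (by omega)).mp h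
    · rintro ⟨hne, hdvd⟩
      refine ⟨Ne.symm hne, Or.inl ?_⟩
      show x.1 * y.1 = 0
      rw [hmul]
      exact (aux_dvd_mul x.1.val y.1.val n (by omega)).mpr hdvd
  -- image of neighbor set under values
  classical
  set F : Finset ℕ := (Finset.range n).filter (fun v => v ≠ 0 ∧ m ∣ v ∧ v ≠ x.1.val) with hF
  have hinj : Function.Injective (fun y : Zdv n => y.1.val) := by
    intro a b h
    exact Subtype.ext (ZMod.val_injective n h)
  have himg : (fun y : Zdv n => y.1.val) '' ((zdg n).neighborSet x) = ↑F := by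
    ext v
    simp only [Set.mem_image, SimpleGraph.mem_neighborSet, Finset.coe_filter,
      Finset.mem_range, Set.mem_setOf_eq, hF]
    constructor
    · rintro ⟨y, hy, rfl⟩
      obtain ⟨hne, hdvd⟩ := (hadj y).mp hy
      exact ⟨ZMod.val_lt y.1, zdv_val_ne_zero n y, hdvd,
        fun h => hne (Subtype.ext (ZMod.val_injective n h))⟩
    · rintro ⟨hvn, hv0, hdvd, hvx⟩
      have hvz : (v : ZMod n) ≠ 0 := by
        rw [Ne, ZMod.natCast_eq_zero_iff]
        intro h
        have := Nat.le_of_dvd (Nat.pos_of_ne_zero hv0) h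
        omega
      have hdz : ((d : ℕ) : ZMod n) ≠ 0 := by
        rw [Ne, ZMod.natCast_eq_zero_iff]
        intro h
        have := Nat.le_of_dvd (by omega) h
        omega
      have hvd : ((v : ℕ) : ZMod n) * ((d : ℕ) : ZMod n) = 0 := by
        rw [← Nat.cast_mul, ZMod.natCast_eq_zero_iff]
        calc n = m * d := hmd.symm
        _ ∣ v * d := mul_dvd_mul_right hdvd d
      refine ⟨⟨(v : ZMod n), hvz, (d : ZMod n), hdz, hvd⟩, ?_, ?_⟩
      · rw [hadj]
        constructor
        · intro h
          apply hvx
          have := congrArg (fun z : Zdv n => z.1.val) h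
          simpa [ZMod.val_cast_of_lt hvn] using this
        · simpa [ZMod.val_cast_of_lt hvn] using hdvd
      · simpa using ZMod.val_cast_of_lt hvn
  have hcard : ((zdg n).neighborSet x).ncard = F.card := by
    rw [← Set.ncard_coe_finset, ← himg, Set.ncard_image_of_injective _ hinj]
  rw [hcard]
  -- card of F₀ = d - 1
  set F₀ : Finset ℕ := (Finset.range n).filter (fun v => v ≠ 0 ∧ m ∣ v) with hF₀
  have hF₀eq : F₀ = Finset.image (fun k => m * (k + 1)) (Finset.range (d - 1)) := by
    ext v
    simp only [hF₀, Finset.mem_filter, Finset.mem_range, Finset.mem_image]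
    constructor
    · rintro ⟨hvn, hv0, j, rfl⟩
      refine ⟨j - 1, ?_, ?_⟩
      · have : m * j < m * d := by omega
        have hj : j < d := lt_of_mul_lt_mul_left this (Nat.zero_le m)
        have hj0 : j ≠ 0 := by rintro rfl; simp at hv0
        omega
      · have hj0 : j ≠ 0 := by rintro rfl; simp at hv0
        congr 1
        omega
    · rintro ⟨k, hk, rfl⟩
      refine ⟨?_, by positivity, ⟨k + 1, rfl⟩⟩
      have : m * (k + 1) ≤ m * (d - 1) := Nat.mul_le_mul_left m (by omega)
      have h2 : m * (d - 1) + m = m * d := by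
        rw [← Nat.mul_succ]
        congr 1
        omega
      omega
  have hF₀card : F₀.card = d - 1 := by
    rw [hF₀eq, Finset.card_image_of_injective _ (fun a b h => by
      have := Nat.eq_of_mul_eq_mul_left hm0 h; omega), Finset.card_range]
  have hcond : (m ∣ x.1.val) ↔ (m ∣ d) := by
    constructor
    · intro h
      exact Nat.dvd_gcd h hmn
    · intro h
      exact dvd_trans h (Nat.gcd_dvd_left _ _)
  by_cases hc : m ∣ d
  · rw [if_pos hc]
    have hcx : m ∣ x.1.val := hcond.mpr hc
    have hxF₀ : x.1.val ∈ F₀ := by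
      simp only [hF₀, Finset.mem_filter, Finset.mem_range]
      exact ⟨ZMod.val_lt x.1, zdv_val_ne_zero n x, hcx⟩
    have hFeq : F = F₀.erase x.1.val := by
      ext v
      simp only [hF, hF₀, Finset.mem_filter, Finset.mem_range, Finset.mem_erase]
      tauto
    rw [hFeq, Finset.card_erase_of_mem hxF₀, hF₀card]
    omega
  · rw [if_neg hc]
    have hcx : ¬ m ∣ x.1.val := fun h => hc (hcond.mp h)
    have hFeq : F = F₀ := by
      ext v
      simp only [hF, hF₀, Finset.mem_filter, Finset.mem_range]
      constructor
      · tauto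
      · rintro ⟨hvn, hv0, hdvd⟩
        exact ⟨hvn, hv0, hdvd, fun h => hcx (h ▸ hdvd)⟩
    rw [hFeq, hF₀card]

/-- Injectivity of the degree formula over proper divisors. -/
lemma formula_inj (d e : ℕ) (hd2 : 1 < d) (he2 : 1 < e) (hdn : d < n) (hen : e < n)
    (hdd : d ∣ n) (hed : e ∣ n)
    (h : (if n / d ∣ d then d - 2 else d - 1) = (if n / e ∣ e then e - 2 else e - 1)) :
    d = e := by
  have key : ∀ a b : ℕ, 1 < a → 1 < b → a ∣ n → b ∣ n → n / a ∣ a → ¬ n / b ∣ b →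
      a - 2 = b - 1 → False := by
    intro a b ha hb han hbn hca hcb heq
    have hab : a = b + 1 := by omega
    have hna : n ∣ a * a := by
      have : n / a * a = n := Nat.div_mul_cancel han
      calc n = n / a * a := this.symm
      _ ∣ a * a := mul_dvd_mul_right hca a
    have hco : Nat.Coprime b a := by
      rw [hab]
      show Nat.gcd b (b + 1) = 1
      rw [Nat.gcd_self_add_right, Nat.gcd_one_right]
    have h1 : b * a ∣ n := hco.mul_dvd_of_dvd_of_dvd hbn han
    have h2 : b * a ∣ a * a := dvd_trans h1 hna
    have h3 : b ∣ a := (Nat.mul_dvd_mul_iff_right (by omega : 0 < a)).mp h2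
    have h4 : b ∣ 1 := by
      have := Nat.dvd_sub h3 (dvd_refl b)
      rwa [hab, Nat.add_sub_cancel_left] at this
    have := Nat.dvd_one.mp h4
    omega
  by_cases hc1 : n / d ∣ d <;> by_cases hc2 : n / e ∣ e
  · rw [if_pos hc1, if_pos hc2] at h; omega
  · rw [if_pos hc1, if_neg hc2] at h
    exact absurd (key d e hd2 he2 hdd hed hc1 hc2 h) (by simp)
  · rw [if_neg hc1, if_pos hc2] at h
    exact absurd (key e d he2 hd2 hed hdd hc2 hc1 h.symm) (by simp)
  · rw [if_neg hc1, if_neg hc2] at h; omega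

end main

theorem degree_eq_iff_gcd_eq (n : ℕ) (h1 : 1 < n) (hn : ¬ n.Prime) (x y : Zdv n) :
    ((zdg n).neighborSet x).ncard = ((zdg n).neighborSet y).ncard ↔
      Nat.gcd x.1.val n = Nat.gcd y.1.val n := by
  haveI : NeZero n := ⟨by omega⟩
  rw [ncard_neighborSet n h1 x, ncard_neighborSet n h1 y]
  constructor
  · intro h
    exact formula_inj n _ _ (zdv_one_lt_gcd n x) (zdv_one_lt_gcd n y)
      (zdv_gcd_lt n x) (zdv_gcd_lt n y) (zdv_gcd_dvd n x) (zdv_gcd_dvd n y) h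
  · intro h
    rw [h]
end

section
/- The compressed zero-divisor graph Γ_E(Z_n) is isomorphic to the annihilating-ideal graph Γ_Ann(Z_n), via the map sending the equivalence class Ω_d to the ideal generated by d. -/
/-- The relation `x ∼ y` iff `ann(x) = ann(y)` on nonzero zero-divisors of `ZMod n`. -/
def annEq (n : ℕ) : Setoid (Zdv n) :=
  ⟨fun x y => {w : ZMod n | x.1 * w = 0} = {w : ZMod n | y.1 * w = 0},
    ⟨fun _ => rfl, fun h => h.symm, fun h1 h2 => h1.trans h2⟩⟩

/-- The compressed zero-divisor graph `Γ_E(ZMod n)`. -/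
def compZDG (n : ℕ) : SimpleGraph (Quotient (annEq n)) :=
  SimpleGraph.fromRel (fun c d => ∃ x y : Zdv n,
    Quotient.mk (annEq n) x = c ∧ Quotient.mk (annEq n) y = d ∧ x.1 * y.1 = 0)

/-- The nonzero ideals of `ZMod n` with nonzero annihilator. -/
abbrev AnnIdeal (n : ℕ) : Type :=
  {I : Ideal (ZMod n) // I ≠ ⊥ ∧ ∃ J : Ideal (ZMod n), J ≠ ⊥ ∧ I * J = ⊥}

/-- The annihilating-ideal graph `Γ_Ann(ZMod n)`. -/
def annIdealGraph (n : ℕ) : SimpleGraph (AnnIdeal n) :=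
  SimpleGraph.fromRel (fun I J => I.1 * J.1 = ⊥)

namespace CompIsoAux

variable {n : ℕ}

/-- `ZMod n` is a principal ideal ring. -/
instance : IsPrincipalIdealRing (ZMod n) :=
  IsPrincipalIdealRing.of_surjective (Int.castRingHom (ZMod n)) ZMod.intCast_surjective

lemma mul_eq_zero_iff_dvd (hn : 0 < n) (x w : ZMod n) :
    x * w = 0 ↔ (n / Nat.gcd n x.val) ∣ w.val := by
  have : NeZero n := ⟨hn.ne'⟩
  set g := Nat.gcd n x.val with hg
  have hgpos : 0 < g := Nat.gcd_pos_of_pos_left _ hn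
  have hgdvd : g ∣ n := Nat.gcd_dvd_left _ _
  have h1 : x * w = 0 ↔ n ∣ x.val * w.val := by
    conv_lhs => rw [← ZMod.natCast_zmod_val x, ← ZMod.natCast_zmod_val w]
    rw [← Nat.cast_mul, ZMod.natCast_eq_zero_iff]
  rw [h1]
  have hn' : n = g * (n / g) := (Nat.mul_div_cancel' hgdvd).symm
  have hx' : x.val = g * (x.val / g) := (Nat.mul_div_cancel' (Nat.gcd_dvd_right _ _)).symm
  constructor
  · intro h
    have h2 : g * (n / g) ∣ g * ((x.val / g) * w.val) := by
      rw [← mul_assoc, ← hx', ← hn']; exact h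
    have h3 : (n / g) ∣ (x.val / g) * w.val := (mul_dvd_mul_iff_left hgpos.ne').mp h2
    exact (Nat.coprime_div_gcd_div_gcd hgpos).dvd_of_dvd_mul_left h3
  · intro h
    calc n = g * (n / g) := hn'
    _ ∣ x.val * w.val := mul_dvd_mul (Nat.gcd_dvd_right _ _) h

lemma gcd_lt (hn : 0 < n) (x : Zdv n) : 1 < Nat.gcd n x.1.val := by
  have : NeZero n := ⟨hn.ne'⟩
  rcases Nat.lt_or_ge 1 (Nat.gcd n x.1.val) with h | h
  · exact h
  exfalso
  have hgpos : 0 < Nat.gcd n x.1.val := Nat.gcd_pos_of_pos_left _ hn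
  have hg1 : Nat.gcd n x.1.val = 1 := le_antisymm h hgpos
  -- x is a unit
  have hunit : IsUnit x.1 := by
    rw [← ZMod.natCast_zmod_val x.1]
    rw [ZMod.isUnit_iff_coprime]
    exact Nat.coprime_comm.mp hg1
  obtain ⟨y, hy0, hxy⟩ := x.2.2
  obtain ⟨u, hu⟩ := hunit
  apply hy0
  have : (↑u⁻¹ : ZMod n) * (x.1 * y) = y := by
    rw [← mul_assoc, ← hu, ← Units.val_mul, inv_mul_cancel, Units.val_one, one_mul]
  rw [hxy, mul_zero] at this
  exact this.symm

lemma span_eq_span_gcd (x : ZMod n) [NeZero n] :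
    Ideal.span {x} = Ideal.span {(Nat.gcd n x.val : ZMod n)} := by
  apply le_antisymm
  · rw [Ideal.span_singleton_le_span_singleton]
    refine ⟨(x.val / Nat.gcd n x.val : ℕ), ?_⟩
    rw [← Nat.cast_mul, Nat.mul_div_cancel' (Nat.gcd_dvd_right _ _), ZMod.natCast_zmod_val]
  · rw [Ideal.span_singleton_le_span_singleton]
    refine ⟨((Nat.gcdB n x.val : ℤ) : ZMod n), ?_⟩
    have hb := Nat.gcd_eq_gcd_ab n x.val
    have : ((Nat.gcd n x.val : ℤ) : ZMod n) = ((n * Nat.gcdA n x.val + x.val * Nat.gcdB n x.val : ℤ) : ZMod n) := by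
      exact_mod_cast congrArg (fun z : ℤ => (z : ZMod n)) hb
    push_cast at this
    rw [ZMod.natCast_self, zero_mul, zero_add, ZMod.natCast_zmod_val] at this
    exact_mod_cast this

lemma ann_set_span (hn : 1 < n) (x y : Zdv n)
    (h : {w : ZMod n | x.1 * w = 0} = {w : ZMod n | y.1 * w = 0}) :
    Ideal.span {x.1} = Ideal.span {y.1} := by
  have hn0 : 0 < n := lt_trans Nat.zero_lt_one hn
  have : NeZero n := ⟨hn0.ne'⟩
  set gx := Nat.gcd n x.1.val with hgx
  set gy := Nat.gcd n y.1.val with hgy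
  have hgx1 : 1 < gx := gcd_lt hn0 x
  have hgy1 : 1 < gy := gcd_lt hn0 y
  have hgxd : gx ∣ n := Nat.gcd_dvd_left _ _
  have hgyd : gy ∣ n := Nat.gcd_dvd_left _ _
  set mx := n / gx with hmx
  set my := n / gy with hmy
  have hmxlt : mx < n := Nat.div_lt_self hn0 hgx1
  have hmylt : my < n := Nat.div_lt_self hn0 hgy1
  -- (mx : ZMod n) is annihilated by x, hence by y, so my ∣ mx; symmetrically
  have key : ∀ a b : Zdv n, {w : ZMod n | a.1 * w = 0} ⊆ {w : ZMod n | b.1 * w = 0} →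
      (n / Nat.gcd n b.1.val) ∣ (n / Nat.gcd n a.1.val) := by
    intro a b hab
    have hma : (n / Nat.gcd n a.1.val) < n :=
      Nat.div_lt_self hn0 (gcd_lt hn0 a)
    have h1 : a.1 * ((n / Nat.gcd n a.1.val : ℕ) : ZMod n) = 0 := by
      rw [mul_eq_zero_iff_dvd hn0, ZMod.val_cast_of_lt hma]
    have h2 := hab h1
    rw [Set.mem_setOf_eq, mul_eq_zero_iff_dvd hn0, ZMod.val_cast_of_lt hma] at h2
    exact h2
  have hmxy : mx = my :=
    Nat.dvd_antisymm (key y x h.symm.subset) (key x y h.subset)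
  have hgxy : gx = gy := by
    have h1 : n / mx = gx := Nat.div_div_self hgxd hn0.ne'
    have h2 : n / my = gy := Nat.div_div_self hgyd hn0.ne'
    rw [← h1, ← h2, hmxy]
  rw [span_eq_span_gcd x.1, span_eq_span_gcd y.1, ← hgx, ← hgy, hgxy]

lemma span_ann (hn : 1 < n) (x y : Zdv n)
    (h : Ideal.span {x.1} = Ideal.span {y.1}) :
    {w : ZMod n | x.1 * w = 0} = {w : ZMod n | y.1 * w = 0} := by
  have hxy : ∃ c, x.1 = c * y.1 := by
    have := h.le (Ideal.mem_span_singleton_self x.1)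
    rw [Ideal.mem_span_singleton] at this
    obtain ⟨c, hc⟩ := this
    exact ⟨c, by rw [hc, mul_comm]⟩
  have hyx : ∃ d, y.1 = d * x.1 := by
    have := h.ge (Ideal.mem_span_singleton_self y.1)
    rw [Ideal.mem_span_singleton] at this
    obtain ⟨d, hd⟩ := this
    exact ⟨d, by rw [hd, mul_comm]⟩
  obtain ⟨c, hc⟩ := hxy
  obtain ⟨d, hd⟩ := hyx
  ext w
  simp only [Set.mem_setOf_eq]
  constructor
  · intro hw; rw [hd, mul_assoc, hw, mul_zero]
  · intro hw; rw [hc, mul_assoc, hw, mul_zero]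

/-- The underlying map. -/
def toAnn (x : Zdv n) : AnnIdeal n := by
  refine ⟨Ideal.span {x.1}, ?_, ?_⟩
  · rw [Ne, Ideal.span_singleton_eq_bot]
    exact x.2.1
  · obtain ⟨y, hy0, hxy⟩ := x.2.2
    refine ⟨Ideal.span {y}, ?_, ?_⟩
    · rw [Ne, Ideal.span_singleton_eq_bot]; exact hy0
    · rw [Ideal.span_singleton_mul_span_singleton, hxy, Ideal.span_singleton_eq_bot]

lemma toAnn_val (x : Zdv n) : (toAnn x).1 = Ideal.span {x.1} := rfl

end CompIsoAux

open CompIsoAux in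
theorem compressed_iso_annihilating (n : ℕ) (h1 : 1 < n) (hn : ¬ n.Prime) :
    ∃ e : compZDG n ≃g annIdealGraph n,
      ∀ x : Zdv n, (e (Quotient.mk (annEq n) x)).1 = Ideal.span {x.1} := by
  have hn0 : 0 < n := lt_trans Nat.zero_lt_one h1
  have : NeZero n := ⟨hn0.ne'⟩
  -- the quotient lift
  have hwd : ∀ x y : Zdv n, (annEq n).r x y → toAnn x = toAnn y := by
    intro x y hxy
    exact Subtype.ext (ann_set_span h1 x y hxy)
  set f : Quotient (annEq n) → AnnIdeal n := Quotient.lift toAnn hwd with hf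
  have hfmk : ∀ x : Zdv n, f (Quotient.mk (annEq n) x) = toAnn x := fun x => rfl
  have hinj : Function.Injective f := by
    intro a b
    induction a using Quotient.ind with | _ x =>
    induction b using Quotient.ind with | _ y =>
    intro h
    apply Quotient.sound
    exact span_ann h1 x y (congrArg Subtype.val h)
  have hsurj : Function.Surjective f := by
    intro I
    obtain ⟨I, hI0, J, hJ0, hIJ⟩ := I
    obtain ⟨x, hxI⟩ := Submodule.IsPrincipal.principal I
    have hx0 : x ≠ 0 := by
      rintro rfl
      exact hI0 (by rw [hxI]; simp)
    obtain ⟨y, hyJ, hy0⟩ := Submodule.exists_mem_ne_zero_of_ne_bot hJ0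
    have hxy : x * y = 0 := by
      have : x * y ∈ I * J :=
        Ideal.mul_mem_mul (hxI ▸ Ideal.mem_span_singleton_self x) hyJ
      rw [hIJ] at this
      exact this
    refine ⟨Quotient.mk (annEq n) ⟨x, hx0, y, hy0, hxy⟩, ?_⟩
    rw [hfmk]
    exact Subtype.ext hxI.symm
  set eq : Quotient (annEq n) ≃ AnnIdeal n := Equiv.ofBijective f ⟨hinj, hsurj⟩ with heq
  have heqapp : ∀ a, eq a = f a := fun a => rfl
  -- adjacency
  have hadj : ∀ a b : Quotient (annEq n),
      (annIdealGraph n).Adj (eq a) (eq b) ↔ (compZDG n).Adj a b := by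
    intro a b
    induction a using Quotient.ind with | _ x =>
    induction b using Quotient.ind with | _ y =>
    rw [annIdealGraph, compZDG, SimpleGraph.fromRel_adj, SimpleGraph.fromRel_adj]
    constructor
    · rintro ⟨hne, hmul⟩
      refine ⟨fun h => hne (congrArg eq h), ?_⟩
      have hxy : x.1 * y.1 = 0 := by
        rcases hmul with h | h
        · have : (toAnn x).1 * (toAnn y).1 = ⊥ := h
          rw [toAnn_val, toAnn_val, Ideal.span_singleton_mul_span_singleton,
            Ideal.span_singleton_eq_bot] at this
          exact this
        · have : (toAnn y).1 * (toAnn x).1 = ⊥ := h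
          rw [toAnn_val, toAnn_val, Ideal.span_singleton_mul_span_singleton,
            Ideal.span_singleton_eq_bot] at this
          rw [mul_comm]
          exact this
      exact Or.inl ⟨x, y, rfl, rfl, hxy⟩
    · rintro ⟨hne, hmul⟩
      refine ⟨fun h => hne (eq.injective h), ?_⟩
      have hbot : Ideal.span {x.1} * Ideal.span {y.1} = ⊥ := by
        rcases hmul with ⟨x', y', hx', hy', hxy'⟩ | ⟨x', y', hx', hy', hxy'⟩
        · have h1 : Ideal.span {x'.1} = Ideal.span {x.1} := by
            have := congrArg (fun c => (f c).1) hx'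
            simpa [hfmk, toAnn_val] using this
          have h2 : Ideal.span {y'.1} = Ideal.span {y.1} := by
            have := congrArg (fun c => (f c).1) hy'
            simpa [hfmk, toAnn_val] using this
          rw [← h1, ← h2, Ideal.span_singleton_mul_span_singleton, hxy',
            Ideal.span_singleton_eq_bot]
        · have h1 : Ideal.span {x'.1} = Ideal.span {y.1} := by
            have := congrArg (fun c => (f c).1) hx'
            simpa [hfmk, toAnn_val] using this
          have h2 : Ideal.span {y'.1} = Ideal.span {x.1} := by
            have := congrArg (fun c => (f c).1) hy'
            simpa [hfmk, toAnn_val] using this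
          rw [← h1, ← h2, mul_comm, Ideal.span_singleton_mul_span_singleton, hxy',
            Ideal.span_singleton_eq_bot]
      left
      show (eq (Quotient.mk (annEq n) x)).1 * (eq (Quotient.mk (annEq n) y)).1 = ⊥
      rw [heqapp, heqapp, hfmk, hfmk, toAnn_val, toAnn_val]
      exact hbot
  refine ⟨⟨eq, ?_⟩, ?_⟩
  · intro a b
    exact hadj a b
  · intro x
    show (f (Quotient.mk (annEq n) x)).1 = Ideal.span {x.1}
    rw [hfmk, toAnn_val]
end

section
/- For any composite integer n > 1, the determining number of the zero-divisor graph Γ(Z_n) equals n − φ(n) − τ(n) − 1, where φ is Euler's totient and τ(n) is the number of proper divisors of n (divisors d with 1 < d < n). -/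
/-- A set `S` of vertices is a determining set: any automorphism fixing `S` pointwise
fixes every vertex. -/
def IsDetermining {V : Type*} (G : SimpleGraph V) (S : Set V) : Prop :=
  ∀ σ : G ≃g G, (∀ v ∈ S, σ v = v) → ∀ v, σ v = v

/-- The determining number: the least cardinality of a (finite) determining set. -/
noncomputable def detNum {V : Type*} (G : SimpleGraph V) : ℕ :=
  sInf {m | ∃ S : Set V, S.Finite ∧ S.ncard = m ∧ IsDetermining G S}

namespace ZdvAux

/-! ### Pure number theory helpers -/

lemma nat_key {n : ℕ} (hn : 0 < n) (a b : ℕ) : n ∣ a * b ↔ n / Nat.gcd a n ∣ b := by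
  set d := Nat.gcd a n with hd
  have hd0 : 0 < d := Nat.gcd_pos_of_pos_right a hn
  have hdn : d ∣ n := Nat.gcd_dvd_right a n
  have hda : d ∣ a := Nat.gcd_dvd_left a n
  constructor
  · intro h
    have h2 : d * (n / d) ∣ d * (a / d * b) := by
      rwa [Nat.mul_div_cancel' hdn, ← mul_assoc, Nat.mul_div_cancel' hda]
    have h3 : n / d ∣ a / d * b := (mul_dvd_mul_iff_left hd0.ne').mp h2
    exact ((Nat.coprime_div_gcd_div_gcd hd0).symm).dvd_of_dvd_mul_left h3
  · intro h
    calc n = d * (n / d) := (Nat.mul_div_cancel' hdn).symm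
    _ ∣ a * b := mul_dvd_mul hda h

lemma two_mul_le_of_dvd {k n : ℕ} (hk : k ∣ n) (h : k ≠ n) (hn : 0 < n) : 2 * k ≤ n := by
  obtain ⟨m, rfl⟩ := hk
  rcases Nat.lt_or_ge m 2 with hm | hm
  · interval_cases m <;> omega
  · calc 2 * k ≤ m * k := Nat.mul_le_mul_right k hm
    _ = k * m := mul_comm m k

lemma comb {n : ℕ} (hn : 0 < n) {d d' : ℕ} (hd : d ∣ n) (hd' : d' ∣ n)
    (h1 : 1 < d) (h2 : d < n) (h1' : 1 < d') (h2' : d' < n) (hne : d ≠ d') :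
    ∃ e, e ∣ n ∧ 1 < e ∧ 2 * e < n ∧ ¬ (n / d ∣ e ↔ n / d' ∣ e) := by
  set a := n / d with ha
  set b := n / d' with hb
  have han : a ∣ n := Nat.div_dvd_of_dvd hd
  have hbn : b ∣ n := Nat.div_dvd_of_dvd hd'
  have hda : d * a = n := Nat.mul_div_cancel' hd
  have hdb : d' * b = n := Nat.mul_div_cancel' hd'
  have ha1 : 1 < a := by nlinarith [hda]
  have hb1 : 1 < b := by nlinarith [hdb]
  have haLt : a < n := by nlinarith
  have hbLt : b < n := by nlinarith
  have hab : a ≠ b := by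
    intro h
    rw [h] at hda
    exact hne (Nat.eq_of_mul_eq_mul_right (by omega) (by omega : d * b = d' * b))
  have side : ∀ x y : ℕ, x ∣ n → 1 < x → 0 < y → y < n → x ∣ y → x ≠ y →
      ∃ e, e ∣ n ∧ 1 < e ∧ 2 * e < n ∧ ¬ (x ∣ e ↔ y ∣ e) := by
    intro x y hxn hx1 hy0 hyLt hxy hxyne
    have h2xy : 2 * x ≤ y := two_mul_le_of_dvd hxy hxyne hy0
    refine ⟨x, hxn, hx1, by omega, fun hiff => ?_⟩
    have hyx : y ∣ x := hiff.mp dvd_rfl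
    have := Nat.le_of_dvd (by omega) hyx
    omega
  by_cases hab1 : a ∣ b
  · exact side a b han ha1 (by omega) hbLt hab1 hab
  by_cases hab2 : b ∣ a
  · obtain ⟨e, he1, he2, he3, he4⟩ := side b a hbn hb1 (by omega) haLt hab2 (Ne.symm hab)
    exact ⟨e, he1, he2, he3, fun h => he4 h.symm⟩
  by_cases hb2 : 2 * b < n
  · exact ⟨b, hbn, hb1, hb2, fun h => hab1 (h.mpr dvd_rfl)⟩
  · have h2a : 2 * a < n := by
      have h2an := two_mul_le_of_dvd han (by omega : a ≠ n) hn
      rcases Nat.eq_or_lt_of_le h2an with h | h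
      · exfalso
        have hbb := two_mul_le_of_dvd hbn (by omega : b ≠ n) hn
        omega
      · exact h
    exact ⟨a, han, ha1, h2a, fun h => hab2 (h.mp dvd_rfl)⟩

lemma dvd_sub_iff {k n e : ℕ} (hk : k ∣ n) (he : e ≤ n) : k ∣ n - e ↔ k ∣ e := by
  constructor
  · intro h
    have := Nat.dvd_sub hk h
    rwa [Nat.sub_sub_self he] at this
  · intro h
    exact Nat.dvd_sub hk h

/-! ### The gcd invariant on `ZMod n` -/

variable {n : ℕ}

/-- the gcd invariant of a residue -/
def gc (x : ZMod n) : ℕ := Nat.gcd (ZMod.val x) n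

lemma gc_dvd (x : ZMod n) : gc x ∣ n := Nat.gcd_dvd_right _ _

lemma mul_zero_iff [NeZero n] (x z : ZMod n) :
    x * z = 0 ↔ n / gc x ∣ z.val := by
  have hn : 0 < n := Nat.pos_of_ne_zero (NeZero.ne n)
  rw [← ZMod.val_eq_zero, ZMod.val_mul, ← Nat.dvd_iff_mod_eq_zero, nat_key hn]; rfl

lemma gc_eq_n_iff [NeZero n] (x : ZMod n) : gc x = n ↔ x = 0 := by
  constructor
  · intro h
    have hdvd : n ∣ x.val := by
      have h2 := Nat.gcd_dvd_left x.val n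
      rwa [show Nat.gcd x.val n = n from h] at h2
    exact (ZMod.val_eq_zero x).mp (Nat.eq_zero_of_dvd_of_lt hdvd (ZMod.val_lt x))
  · intro h
    subst h
    simp [gc, ZMod.val_zero]

lemma gc_pos [NeZero n] (x : ZMod n) : 0 < gc x :=
  Nat.gcd_pos_of_pos_right _ (Nat.pos_of_ne_zero (NeZero.ne n))

lemma gc_le [NeZero n] (x : ZMod n) : gc x ≤ n :=
  Nat.le_of_dvd (Nat.pos_of_ne_zero (NeZero.ne n)) (gc_dvd x)

lemma zdv_prop_iff [NeZero n] (x : ZMod n) :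
    (x ≠ 0 ∧ ∃ y : ZMod n, y ≠ 0 ∧ x * y = 0) ↔ 1 < gc x ∧ gc x < n := by
  have hn : 0 < n := Nat.pos_of_ne_zero (NeZero.ne n)
  constructor
  · rintro ⟨hx0, y, hy0, hxy⟩
    have hlt : gc x < n := by
      have := gc_le x
      rcases Nat.eq_or_lt_of_le this with h | h
      · exact absurd ((gc_eq_n_iff x).mp h) hx0
      · exact h
    refine ⟨?_, hlt⟩
    by_contra hg
    have hg1 : gc x = 1 := by have := gc_pos x; omega
    rw [mul_zero_iff, hg1, Nat.div_one] at hxy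
    have := Nat.eq_zero_of_dvd_of_lt hxy (ZMod.val_lt y)
    · exact hy0 ((ZMod.val_eq_zero y).mp (by omega))
  · rintro ⟨hg1, hg2⟩
    refine ⟨fun h => by rw [(gc_eq_n_iff x).mpr h] at hg2; exact absurd hg2 (lt_irrefl n), ?_⟩
    refine ⟨((n / gc x : ℕ) : ZMod n), ?_, ?_⟩
    · have hlt : n / gc x < n := Nat.div_lt_self hn hg1
      have hpos : 0 < n / gc x := Nat.div_pos (gc_le x) (gc_pos x)
      intro h
      rw [← ZMod.val_eq_zero, ZMod.val_cast_of_lt hlt] at h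
      omega
    · rw [mul_zero_iff, ZMod.val_cast_of_lt (Nat.div_lt_self hn hg1)]

lemma gc_cast {a : ℕ} [NeZero n] (ha : a < n) : gc (a : ZMod n) = Nat.gcd a n := by
  unfold gc; rw [ZMod.val_cast_of_lt ha]

/-! ### Graph layer -/

lemma adj_iff (x y : Zdv n) : (zdg n).Adj x y ↔ x ≠ y ∧ x.1 * y.1 = 0 := by
  show (SimpleGraph.fromRel _).Adj x y ↔ _
  rw [SimpleGraph.fromRel_adj]
  constructor
  · rintro ⟨hne, h | h⟩
    · exact ⟨hne, h⟩
    · exact ⟨hne, by rwa [mul_comm]⟩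
  · rintro ⟨hne, h⟩
    exact ⟨hne, Or.inl h⟩

/-- swapping two vertices with the same gcd invariant is a graph automorphism -/
def swapIso [NeZero n] (x y : Zdv n) (h : gc x.1 = gc y.1) : zdg n ≃g zdg n where
  toEquiv := Equiv.swap x y
  map_rel_iff' := by
    intro u v
    have key : ∀ u : Zdv n, ∀ w : ZMod n, (Equiv.swap x y u).1 * w = 0 ↔ u.1 * w = 0 := by
      intro u w
      rcases eq_or_ne u x with rfl | hux
      · rw [Equiv.swap_apply_left, mul_zero_iff, mul_zero_iff, h]
      rcases eq_or_ne u y with rfl | huy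
      · rw [Equiv.swap_apply_right, mul_zero_iff, mul_zero_iff, h]
      · rw [Equiv.swap_apply_of_ne_of_ne hux huy]
    have key2 : ∀ u v : Zdv n, (Equiv.swap x y u).1 * (Equiv.swap x y v).1 = 0 ↔ u.1 * v.1 = 0 := by
      intro u v
      rw [key u, mul_comm, key v, mul_comm]
    rw [adj_iff, adj_iff, key2]
    simp [Equiv.swap_apply_eq_iff]

/-! ### Lower bound -/

lemma lower [NeZero n] (S : Set (Zdv n)) (hdet : IsDetermining (zdg n) S) :
    Nat.card (Zdv n) - ((Nat.divisors n).filter fun d => 1 < d ∧ d < n).card ≤ S.ncard := by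
  classical
  have hn : n ≠ 0 := NeZero.ne n
  have hinj : Set.InjOn (fun v : Zdv n => gc v.1) Sᶜ := by
    intro x hx y hy hgc
    by_contra hne
    have hfix : ∀ v ∈ S, (swapIso x y hgc) v = v := by
      intro v hv
      exact Equiv.swap_apply_of_ne_of_ne (fun h => hx (h ▸ hv)) (fun h => hy (h ▸ hv))
    have := hdet (swapIso x y hgc) hfix x
    rw [show (swapIso x y hgc) x = y from Equiv.swap_apply_left x y] at this
    exact hne this.symm
  have hsub : (fun v : Zdv n => gc v.1) '' Sᶜ ⊆
      ↑((Nat.divisors n).filter fun d => 1 < d ∧ d < n) := by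
    rintro d ⟨v, _, rfl⟩
    simp only [Finset.coe_filter, Set.mem_setOf_eq, Nat.mem_divisors]
    exact ⟨⟨gc_dvd v.1, hn⟩, (zdv_prop_iff v.1).mp v.2⟩
  have h1 : (Sᶜ : Set (Zdv n)).ncard ≤
      ((Nat.divisors n).filter fun d => 1 < d ∧ d < n).card := by
    rw [← Set.ncard_image_of_injOn hinj, ← Set.ncard_coe_finset]
    exact Set.ncard_le_ncard hsub (Finset.finite_toSet _)
  have h2 := Set.ncard_add_ncard_compl S
  omega

/-! ### Upper bound -/

lemma upper_det {n : ℕ} [NeZero n] : IsDetermining (zdg n) {v : Zdv n | ¬ v.1.val ∣ n} := by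
  intro σ hfix
  have hn : 0 < n := Nat.pos_of_ne_zero (NeZero.ne n)
  have hR : ∀ v : Zdv n, v.1.val ∣ n → (σ v).1.val ∣ n := by
    intro v hv
    by_contra hcon
    have h1 : σ (σ v) = σ v := hfix (σ v) hcon
    have h2 : σ v = v := σ.injective h1
    rw [h2] at hcon
    exact hcon hv
  intro v
  by_cases hv : v.1.val ∣ n
  swap
  · exact hfix v hv
  by_contra hne
  set w := σ v with hw
  have hv' : w.1.val ∣ n := hR v hv
  have hgcv : gc v.1 = v.1.val := Nat.gcd_eq_left hv
  have hgcw : gc w.1 = w.1.val := Nat.gcd_eq_left hv'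
  have hbv : 1 < v.1.val ∧ v.1.val < n := hgcv ▸ (zdv_prop_iff v.1).mp v.2
  have hbw : 1 < w.1.val ∧ w.1.val < n := hgcw ▸ (zdv_prop_iff w.1).mp w.2
  have hdd : v.1.val ≠ w.1.val := by
    intro h
    exact hne (Subtype.ext (ZMod.val_injective n h.symm))
  obtain ⟨e, hen, he1, he2, hxor⟩ :=
    comb hn hv hv' hbv.1 hbv.2 hbw.1 hbw.2 hdd
  have hsub_lt : n - e < n := by omega
  have hgs : Nat.gcd (n - e) n = e := by
    apply Nat.dvd_antisymm
    · have hg1 : Nat.gcd (n - e) n ∣ n - e := Nat.gcd_dvd_left _ _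
      have hg2 : Nat.gcd (n - e) n ∣ n := Nat.gcd_dvd_right _ _
      have := Nat.dvd_sub hg2 hg1
      rwa [Nat.sub_sub_self (by omega : e ≤ n)] at this
    · exact Nat.dvd_gcd (Nat.dvd_sub hen dvd_rfl) hen
  have hsprop : ((n - e : ℕ) : ZMod n) ≠ 0 ∧
      ∃ y : ZMod n, y ≠ 0 ∧ ((n - e : ℕ) : ZMod n) * y = 0 := by
    rw [zdv_prop_iff, gc_cast hsub_lt, hgs]
    omega
  set s : Zdv n := ⟨((n - e : ℕ) : ZMod n), hsprop⟩ with hs_def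
  have hsval : s.1.val = n - e := ZMod.val_cast_of_lt hsub_lt
  have hsS : ¬ s.1.val ∣ n := by
    rw [hsval]
    intro hdvd
    have := two_mul_le_of_dvd hdvd (by omega : n - e ≠ n) hn
    omega
  have hss : σ s = s := hfix s hsS
  have hadj : (zdg n).Adj w s ↔ (zdg n).Adj v s := by
    conv_rhs => rw [← σ.map_rel_iff]
    rw [← hw, hss]
  have hcompute : ∀ u : Zdv n, u.1.val ∣ n → 1 < u.1.val → u.1.val < n →
      ((zdg n).Adj u s ↔ n / u.1.val ∣ e) := by
    intro u hu h1u h2u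
    rw [adj_iff, mul_zero_iff, show gc u.1 = u.1.val from Nat.gcd_eq_left hu, hsval,
      dvd_sub_iff (Nat.div_dvd_of_dvd hu) (by omega : e ≤ n)]
    have hune : u ≠ s := by
      intro h
      have : u.1.val = n - e := h ▸ hsval
      have := two_mul_le_of_dvd hu (by omega) hn
      omega
    exact ⟨fun h => h.2, fun h => ⟨hune, h⟩⟩
  rw [hcompute w hv' hbw.1 hbw.2, hcompute v hv hbv.1 hbv.2] at hadj
  exact hxor hadj.symm

lemma upper_card {n : ℕ} [NeZero n] (h1 : 1 < n) :
    ({v : Zdv n | ¬ v.1.val ∣ n} : Set (Zdv n)).ncard =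
      Nat.card (Zdv n) - ((Nat.divisors n).filter fun d => 1 < d ∧ d < n).card := by
  classical
  have hn : n ≠ 0 := by omega
  set R : Set (Zdv n) := {v : Zdv n | v.1.val ∣ n} with hR
  have himg : (fun v : Zdv n => v.1.val) '' R =
      ↑((Nat.divisors n).filter fun d => 1 < d ∧ d < n) := by
    ext d
    simp only [Set.mem_image, Finset.coe_filter, Set.mem_setOf_eq, Nat.mem_divisors]
    constructor
    · rintro ⟨v, hv, rfl⟩
      have hgcv : gc v.1 = v.1.val := Nat.gcd_eq_left hv
      exact ⟨⟨hv, hn⟩, hgcv ▸ (zdv_prop_iff v.1).mp v.2⟩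
    · rintro ⟨⟨hdvd, -⟩, hd1, hd2⟩
      have hprop : ((d : ℕ) : ZMod n) ≠ 0 ∧
          ∃ y : ZMod n, y ≠ 0 ∧ ((d : ℕ) : ZMod n) * y = 0 := by
        rw [zdv_prop_iff, gc_cast hd2, Nat.gcd_eq_left hdvd]
        exact ⟨hd1, hd2⟩
      refine ⟨⟨((d : ℕ) : ZMod n), hprop⟩, ?_, ZMod.val_cast_of_lt hd2⟩
      show ZMod.val ((d : ℕ) : ZMod n) ∣ n
      rw [ZMod.val_cast_of_lt hd2]
      exact hdvd
  have hinj : Set.InjOn (fun v : Zdv n => v.1.val) R := by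
    intro x _ y _ h
    exact Subtype.ext (ZMod.val_injective n h)
  have hRcard : R.ncard = ((Nat.divisors n).filter fun d => 1 < d ∧ d < n).card := by
    rw [← Set.ncard_image_of_injOn hinj, himg, Set.ncard_coe_finset]
  have hcompl : ({v : Zdv n | ¬ v.1.val ∣ n} : Set (Zdv n)) = Rᶜ := by
    ext v; simp [hR]
  have h2 := Set.ncard_add_ncard_compl R
  rw [hcompl]
  omega

/-! ### Counting the vertices -/

noncomputable def unitsEquiv (M : Type*) [Monoid M] : Mˣ ≃ {x : M // IsUnit x} where
  toFun u := ⟨u, u.isUnit⟩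
  invFun x := x.2.unit
  left_inv u := Units.ext u.isUnit.unit_spec
  right_inv x := Subtype.ext x.2.unit_spec

lemma isUnit_iff_gc [NeZero n] (x : ZMod n) : IsUnit x ↔ gc x = 1 := by
  conv_lhs => rw [← ZMod.natCast_zmod_val x]
  exact ZMod.isUnit_iff_coprime x.val n

lemma card_zdv (h1 : 1 < n) [NeZero n] : Nat.card (Zdv n) = n - n.totient - 1 := by
  classical
  haveI : Fact (1 < n) := ⟨h1⟩
  set VS : Set (ZMod n) := {x | x ≠ 0 ∧ ∃ y : ZMod n, y ≠ 0 ∧ x * y = 0} with hVS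
  have h0 : Nat.card (Zdv n) = VS.ncard := by
    rw [← Nat.card_coe_set_eq]
    rfl
  have hcompl : VSᶜ = insert (0 : ZMod n) {x : ZMod n | IsUnit x} := by
    ext x
    simp only [Set.mem_compl_iff, hVS, Set.mem_setOf_eq, Set.mem_insert_iff]
    rw [zdv_prop_iff x, isUnit_iff_gc x, ← gc_eq_n_iff x]
    have := gc_pos x
    have := gc_le x
    constructor
    · intro h
      omega
    · intro h
      omega
  have hunits : ({x : ZMod n | IsUnit x} : Set (ZMod n)).ncard = n.totient := by
    rw [← Nat.card_coe_set_eq]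
    have : Nat.card {x : ZMod n | IsUnit x} = Nat.card (ZMod n)ˣ :=
      Nat.card_congr (unitsEquiv (ZMod n)).symm
    rw [this, Nat.card_eq_fintype_card, ZMod.card_units_eq_totient]
  have h0notunit : (0 : ZMod n) ∉ {x : ZMod n | IsUnit x} := by
    simp only [Set.mem_setOf_eq]
    rw [isUnit_zero_iff]
    exact zero_ne_one
  have hcc : (VSᶜ).ncard = n.totient + 1 := by
    rw [hcompl, Set.ncard_insert_of_notMem h0notunit (Set.toFinite _), hunits]
  have hsum := Set.ncard_add_ncard_compl VS
  rw [Nat.card_eq_fintype_card, ZMod.card n] at hsum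
  have := Nat.totient_lt n h1
  omega

end ZdvAux

theorem detNum_zdg_zmod (n : ℕ) (h1 : 1 < n) (hn : ¬ n.Prime) :
    detNum (zdg n) =
      n - Nat.totient n - ((Nat.divisors n).filter fun d => 1 < d ∧ d < n).card - 1 := by
  haveI : NeZero n := ⟨by omega⟩
  classical
  set τ := ((Nat.divisors n).filter fun d => 1 < d ∧ d < n).card with hτ
  have hmem : (Nat.card (Zdv n) - τ) ∈
      {m | ∃ S : Set (Zdv n), S.Finite ∧ S.ncard = m ∧ IsDetermining (zdg n) S} :=
    ⟨{v : Zdv n | ¬ v.1.val ∣ n}, Set.toFinite _, ZdvAux.upper_card h1, ZdvAux.upper_det⟩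
  have hlb : ∀ m ∈ {m | ∃ S : Set (Zdv n), S.Finite ∧ S.ncard = m ∧ IsDetermining (zdg n) S},
      Nat.card (Zdv n) - τ ≤ m := by
    rintro m ⟨S, -, rfl, hdet⟩
    exact ZdvAux.lower S hdet
  have hval : detNum (zdg n) = Nat.card (Zdv n) - τ :=
    Nat.le_antisymm (Nat.sInf_le hmem) (le_csInf ⟨_, hmem⟩ hlb)
  rw [hval, ZdvAux.card_zdv h1]
  have := Nat.totient_lt n h1
  omega
end

section
/- For any composite integer n > 1, the metric dimension of the zero-divisor graph Γ(Z_n) equals n − φ(n) − τ(n) − 1, where φ is Euler's totient and τ(n) is the number of proper divisors of n. -/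
/-- A set `S` of vertices is a resolving set: distinct vertices have distinct
distance vectors to `S`. -/
def IsResolving {V : Type*} (G : SimpleGraph V) (S : Set V) : Prop :=
  ∀ u v : V, (∀ w ∈ S, G.dist u w = G.dist v w) → u = v

/-- The metric dimension: the least cardinality of a (finite) resolving set. -/
noncomputable def mdim {V : Type*} (G : SimpleGraph V) : ℕ :=
  sInf {m | ∃ S : Set V, S.Finite ∧ S.ncard = m ∧ IsResolving G S}

namespace MdimZdg

open SimpleGraph

variable {n : ℕ}

/-- The "class" of a vertex: gcd of its value with `n`. -/
def cls (x : Zdv n) : ℕ := Nat.gcd (x.1.val) n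

lemma cls_dvd (x : Zdv n) : cls x ∣ n := Nat.gcd_dvd_right _ _

lemma val_pos (h1 : 1 < n) (x : Zdv n) : 0 < x.1.val := by
  haveI : NeZero n := ⟨by omega⟩
  exact Nat.pos_of_ne_zero fun h => x.2.1 ((ZMod.val_eq_zero _).1 h)

lemma val_lt (h1 : 1 < n) (x : Zdv n) : x.1.val < n := by
  haveI : NeZero n := ⟨by omega⟩
  exact ZMod.val_lt _

lemma cls_le_val (h1 : 1 < n) (x : Zdv n) : cls x ≤ x.1.val :=
  Nat.le_of_dvd (val_pos h1 x) (Nat.gcd_dvd_left _ _)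

lemma cls_lt (h1 : 1 < n) (x : Zdv n) : cls x < n :=
  lt_of_le_of_lt (cls_le_val h1 x) (val_lt h1 x)

lemma mul_eq_zero_iff (h1 : 1 < n) (x y : ZMod n) : x * y = 0 ↔ n ∣ x.val * y.val := by
  haveI : NeZero n := ⟨by omega⟩
  rw [← ZMod.val_eq_zero, ZMod.val_mul]
  omega

lemma one_lt_cls (h1 : 1 < n) (x : Zdv n) : 1 < cls x := by
  haveI : NeZero n := ⟨by omega⟩
  rcases Nat.lt_or_ge 1 (cls x) with h | h
  · exact h
  have h0 : cls x ≠ 0 := by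
    intro h0
    have := Nat.eq_zero_of_gcd_eq_zero_right h0
    omega
  have hc : Nat.gcd x.1.val n = 1 := by
    have : cls x = 1 := by omega
    exact this
  obtain ⟨y, hy0, hxy⟩ := x.2.2
  have hdvd : n ∣ x.1.val * y.val := (mul_eq_zero_iff h1 _ _).1 hxy
  have hco : Nat.Coprime (x.1.val) n := hc
  have hyv : n ∣ y.val := hco.symm.dvd_of_dvd_mul_left hdvd
  have : y.val = 0 := Nat.eq_zero_of_dvd_of_lt hyv (ZMod.val_lt y)
  exact absurd ((ZMod.val_eq_zero y).1 this) hy0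

lemma dvd_mul_iff_cls (h1 : 1 < n) (a b : ℕ) :
    n ∣ a * b ↔ n ∣ Nat.gcd a n * Nat.gcd b n := by
  constructor
  · intro h
    have h2 : Nat.gcd a n * Nat.gcd b n = Nat.gcd (a * Nat.gcd b n) (n * Nat.gcd b n) :=
      (Nat.gcd_mul_right a (Nat.gcd b n) n).symm
    rw [h2]
    refine Nat.dvd_gcd ?_ (dvd_mul_right n _)
    have h3 : a * Nat.gcd b n = Nat.gcd (a * b) (a * n) := (Nat.gcd_mul_left a b n).symm
    rw [h3]
    exact Nat.dvd_gcd h (dvd_mul_left n a)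
  · intro h
    exact h.trans (mul_dvd_mul (Nat.gcd_dvd_left a n) (Nat.gcd_dvd_left b n))

lemma adj_iff (h1 : 1 < n) (x y : Zdv n) :
    (zdg n).Adj x y ↔ x ≠ y ∧ n ∣ cls x * cls y := by
  unfold zdg
  rw [SimpleGraph.fromRel_adj]
  have : (x.1 * y.1 = 0 ∨ y.1 * x.1 = 0) ↔ n ∣ cls x * cls y := by
    rw [mul_comm y.1 x.1, or_self, mul_eq_zero_iff h1]
    exact dvd_mul_iff_cls h1 _ _
  tauto

lemma exists_vertex_val (h1 : 1 < n) {m : ℕ} (h0 : 0 < m) (hm : m < n)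
    (hg : 1 < Nat.gcd m n) : ∃ x : Zdv n, x.1.val = m := by
  haveI : NeZero n := ⟨by omega⟩
  set g := Nat.gcd m n with hgdef
  have hgm : g ∣ m := Nat.gcd_dvd_left _ _
  have hgn : g ∣ n := Nat.gcd_dvd_right _ _
  have hx0 : ((m : ZMod n)) ≠ 0 := by
    intro h
    rw [ZMod.natCast_eq_zero_iff] at h
    exact absurd (Nat.le_of_dvd h0 h) (by omega)
  have hyval : (0 : ℕ) < n / g ∧ n / g < n := by
    constructor
    · exact Nat.div_pos (Nat.le_of_dvd (by omega) hgn) (by omega)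
    · exact Nat.div_lt_self (by omega) hg
  have hy0 : ((n / g : ℕ) : ZMod n) ≠ 0 := by
    intro h
    rw [ZMod.natCast_eq_zero_iff] at h
    exact absurd (Nat.le_of_dvd hyval.1 h) (by omega)
  refine ⟨⟨(m : ZMod n), hx0, ((n / g : ℕ) : ZMod n), hy0, ?_⟩, ?_⟩
  · rw [← Nat.cast_mul, ZMod.natCast_eq_zero_iff]
    obtain ⟨m', hm'⟩ := hgm
    rw [hm', mul_comm g m', mul_assoc, Nat.mul_div_cancel' hgn]
    exact dvd_mul_left n m' 
  · exact ZMod.val_natCast_of_lt hm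

lemma exists_vertex (h1 : 1 < n) {d : ℕ} (hd : d ∣ n) (hd1 : 1 < d) (hdn : d < n) :
    ∃ x : Zdv n, x.1.val = d ∧ cls x = d := by
  obtain ⟨x, hx⟩ := exists_vertex_val h1 (by omega) hdn
    (by rw [Nat.gcd_eq_left hd]; exact hd1)
  exact ⟨x, hx, by unfold cls; rw [hx, Nat.gcd_eq_left hd]⟩

lemma exists_nonrep (h1 : 1 < n) {d : ℕ} (hd : d ∣ n) (hd1 : 1 < d) (hdn : 2 * d < n) :
    ∃ x : Zdv n, cls x = d ∧ ¬ (x.1.val ∣ n) := by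
  have hgcd : Nat.gcd (n - d) n = d := by
    have h2 : n - (n - d) = d := by omega
    have e1 : Nat.gcd (n - d) (n - (n - d)) = Nat.gcd (n - d) n :=
      Nat.gcd_sub_self_right (by omega)
    rw [h2] at e1
    have e2 : Nat.gcd (n - d) d = Nat.gcd n d := Nat.gcd_sub_self_left (by omega)
    rw [← e1, e2]
    exact Nat.gcd_eq_right hd
  obtain ⟨x, hx⟩ := exists_vertex_val h1 (m := n - d) (by omega) (by omega)
    (by rw [hgcd]; exact hd1)
  refine ⟨x, by unfold cls; rw [hx, hgcd], ?_⟩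
  rw [hx]
  intro hdvd
  obtain ⟨k, hk⟩ := hdvd
  have hklt : k ≠ 0 ∧ k ≠ 1 := by
    constructor <;> rintro rfl <;> omega
  have : 2 * (n - d) ≤ (n - d) * k := by
    have : 2 ≤ k := by omega
    calc 2 * (n - d) ≤ k * (n - d) := Nat.mul_le_mul_right _ this
    _ = (n - d) * k := mul_comm _ _
  omega

lemma ne_of_cls_ne {x y : Zdv n} (h : cls x ≠ cls y) : x ≠ y := fun he => h (by rw [he])

lemma reachable_all (h1 : 1 < n) (x y : Zdv n) : (zdg n).Reachable x y := by
  by_cases hxy : x = y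
  · exact hxy ▸ Reachable.refl x
  set a := cls x with ha
  set b := cls y with hb
  have hadvd : a ∣ n := cls_dvd x
  have hbdvd : b ∣ n := cls_dvd y
  have ha1 : 1 < a := one_lt_cls h1 x
  have hb1 : 1 < b := one_lt_cls h1 y
  have han : a < n := cls_lt h1 x
  have hbn : b < n := cls_lt h1 y
  by_cases hab : n ∣ a * b
  · exact ((adj_iff h1 x y).2 ⟨hxy, hab⟩).reachable
  by_cases hg : 1 < Nat.gcd a b
  · -- middle vertex of class n / gcd a b
    set g := Nat.gcd a b with hgdef
    have hga : g ∣ a := Nat.gcd_dvd_left _ _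
    have hgb : g ∣ b := Nat.gcd_dvd_right _ _
    have hgn : g ∣ n := hga.trans hadvd
    set f := n / g with hf
    have hfn : f ∣ n := Nat.div_dvd_of_dvd hgn
    have hgltn : g < n := lt_of_le_of_lt (Nat.le_of_dvd (by omega) hga) han
    have hf1 : 1 < f := by
      obtain ⟨c, hc⟩ := hgn
      have hc2 : 2 ≤ c := by
        rcases Nat.lt_or_ge c 2 with h | h
        · interval_cases c <;> omega
        · exact h
      rw [hf, hc, Nat.mul_div_cancel_left _ (by omega)]
      omega
    have hflt : f < n := Nat.div_lt_self (by omega) hg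
    obtain ⟨w, hwval, hwcls⟩ := exists_vertex h1 hfn hf1 hflt
    have hnaf : n ∣ a * f := by
      obtain ⟨a', ha'⟩ := hga
      have : a * f = a' * n := by
        rw [ha', hf, mul_comm g a', mul_assoc, Nat.mul_div_cancel' hgn]
      rw [this]
      exact dvd_mul_left n a'
    have hnfb : n ∣ f * b := by
      obtain ⟨b', hb'⟩ := hgb
      have : f * b = n * b' := by
        rw [hb', hf, ← mul_assoc, Nat.div_mul_cancel hgn]
      exact this ▸ dvd_mul_right n b' 
    have hfa : f ≠ a := by
      intro hfa
      apply hab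
      have : n = a * g := by rw [← hfa, hf, Nat.div_mul_cancel hgn]
      rw [this]
      exact mul_dvd_mul_left a hgb
    have hfb : f ≠ b := by
      intro hfb
      apply hab
      have : n = b * g := by rw [← hfb, hf, Nat.div_mul_cancel hgn]
      rw [this, mul_comm a b]
      exact mul_dvd_mul_left b hga
    have hxw : (zdg n).Adj x w := (adj_iff h1 x w).2
      ⟨ne_of_cls_ne (by rw [hwcls, ← ha]; exact fun h => hfa h.symm), by rw [hwcls, ← ha]; exact hnaf⟩
    have hwy : (zdg n).Adj w y := (adj_iff h1 w y).2
      ⟨ne_of_cls_ne (by rw [hwcls, ← hb]; exact hfb), by rw [hwcls, ← hb]; exact hnfb⟩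
    exact (hxw.reachable).trans hwy.reachable
  · -- coprime classes
    have hab1 : Nat.Coprime a b := by
      have : Nat.gcd a b ≠ 0 := fun h => by
        have := Nat.eq_zero_of_gcd_eq_zero_left h; omega
      unfold Nat.Coprime; omega
    have habn : a * b ∣ n := Nat.Coprime.mul_dvd_of_dvd_of_dvd hab1 hadvd hbdvd
    obtain ⟨k, hk⟩ := habn
    have hk0 : 0 < k := by
      rcases Nat.eq_zero_or_pos k with h | h
      · rw [h, mul_zero] at hk; omega
      · exact h
    have hna : n / a = b * k := by rw [hk, mul_assoc, Nat.mul_div_cancel_left _ (by omega)]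
    have hnb : n / b = a * k := by
      rw [hk, mul_comm a b, mul_assoc, Nat.mul_div_cancel_left _ (by omega)]
    have hfa : n / a ∣ n := Nat.div_dvd_of_dvd hadvd
    have hfb : n / b ∣ n := Nat.div_dvd_of_dvd hbdvd
    obtain ⟨w1, hw1val, hw1cls⟩ := exists_vertex h1 hfa
      (by rw [hna]; nlinarith) (Nat.div_lt_self (by omega) ha1)
    obtain ⟨w2, hw2val, hw2cls⟩ := exists_vertex h1 hfb
      (by rw [hnb]; nlinarith) (Nat.div_lt_self (by omega) hb1)
    have hane : a ≠ n / a := by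
      intro h
      have hn : n = a * a := Nat.eq_mul_of_div_eq_right hadvd h.symm
      have hdb : b ∣ a * a := hn ▸ hbdvd
      have : b = 1 := (hab1.symm.mul_right hab1.symm).eq_one_of_dvd hdb
      omega
    have hbne : b ≠ n / b := by
      intro h
      have hn : n = b * b := Nat.eq_mul_of_div_eq_right hbdvd h.symm
      have hda : a ∣ b * b := hn ▸ hadvd
      have : a = 1 := (hab1.mul_right hab1).eq_one_of_dvd hda
      omega
    have hw1w2 : n / a ≠ n / b := by
      rw [hna, hnb]
      intro h
      have : a = b := by
        have := Nat.eq_of_mul_eq_mul_right hk0 h; omega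
      rw [this] at hab1
      unfold Nat.Coprime at hab1
      rw [Nat.gcd_self] at hab1
      omega
    have hxw1 : (zdg n).Adj x w1 := (adj_iff h1 x w1).2
      ⟨ne_of_cls_ne (by rw [hw1cls, ← ha]; exact hane), by
        rw [hw1cls, ← ha, Nat.mul_div_cancel' hadvd]⟩
    have hw1w2adj : (zdg n).Adj w1 w2 := (adj_iff h1 w1 w2).2
      ⟨ne_of_cls_ne (by rw [hw1cls, hw2cls]; exact hw1w2), by
        rw [hw1cls, hw2cls, hna, hnb, hk]
        exact ⟨k, by ring⟩⟩
    have hw2y : (zdg n).Adj w2 y := (adj_iff h1 w2 y).2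
      ⟨ne_of_cls_ne (by rw [hw2cls, ← hb]; exact fun h => hbne h.symm), by
        rw [hw2cls, ← hb, mul_comm, Nat.mul_div_cancel' hbdvd]⟩
    exact hxw1.reachable.trans (hw1w2adj.reachable.trans hw2y.reachable)

lemma dist_iso {V : Type*} {G : SimpleGraph V} (φ : G ≃g G) (u v : V)
    (h : G.Reachable u v) : G.dist (φ u) (φ v) = G.dist u v := by
  have le1 : ∀ (ψ : G ≃g G) (a b : V), G.Reachable a b →
      G.dist (ψ a) (ψ b) ≤ G.dist a b := by
    intro ψ a b hr
    obtain ⟨p, hp⟩ := hr.exists_walk_length_eq_dist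
    calc G.dist (ψ a) (ψ b) ≤ (p.map ψ.toHom).length := SimpleGraph.dist_le _
    _ = p.length := SimpleGraph.Walk.length_map _ _
    _ = G.dist a b := hp
  refine le_antisymm (le1 φ u v h) ?_
  have h2 := le1 φ.symm (φ u) (φ v) (h.map φ.toHom)
  simpa using h2

lemma dist_swap (h1 : 1 < n) {u v : Zdv n} (hc : cls u = cls v) (w : Zdv n)
    (hwu : w ≠ u) (hwv : w ≠ v) : (zdg n).dist u w = (zdg n).dist v w := by
  have hclsswap : ∀ a, cls (Equiv.swap u v a) = cls a := by
    intro a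
    rcases eq_or_ne a u with rfl | hau
    · rw [Equiv.swap_apply_left]; exact hc.symm
    rcases eq_or_ne a v with rfl | hav
    · rw [Equiv.swap_apply_right]; exact hc
    · rw [Equiv.swap_apply_of_ne_of_ne hau hav]
  let φ : zdg n ≃g zdg n := by
    refine ⟨Equiv.swap u v, ?_⟩
    intro a b
    rw [adj_iff h1, adj_iff h1, hclsswap, hclsswap, ne_eq, ne_eq,
      Equiv.apply_eq_iff_eq]
  have hφu : φ u = v := Equiv.swap_apply_left u v
  have hφw : φ w = w := Equiv.swap_apply_of_ne_of_ne hwu hwv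
  calc (zdg n).dist u w = (zdg n).dist (φ u) (φ w) :=
        (dist_iso φ u w (reachable_all h1 u w)).symm
  _ = (zdg n).dist v w := by rw [hφu, hφw]

lemma mem_iff (h1 : 1 < n) (x : ZMod n) :
    (x ≠ 0 ∧ ∃ y : ZMod n, y ≠ 0 ∧ x * y = 0) ↔ (x ≠ 0 ∧ ¬ IsUnit x) := by
  haveI : NeZero n := ⟨by omega⟩
  constructor
  · rintro ⟨hx, y, hy, hxy⟩
    refine ⟨hx, fun hu => ?_⟩
    obtain ⟨u, rfl⟩ := hu
    apply hy
    have h2 := congrArg (fun z => ((↑u⁻¹ : ZMod n)) * z) hxy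
    simpa [← mul_assoc] using h2
  · rintro ⟨hx, hu⟩
    refine ⟨hx, ?_⟩
    have hvpos : 0 < x.val := Nat.pos_of_ne_zero fun h => hx ((ZMod.val_eq_zero _).1 h)
    have hvlt : x.val < n := ZMod.val_lt x
    have hg1 : 1 < Nat.gcd x.val n := by
      have hne1 : Nat.gcd x.val n ≠ 1 := by
        intro h
        apply hu
        have := (ZMod.isUnit_iff_coprime x.val n).2 h
        rwa [ZMod.natCast_rightInverse x] at this
      have hne0 : Nat.gcd x.val n ≠ 0 := by
        intro h
        have := Nat.eq_zero_of_gcd_eq_zero_right h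
        omega
      omega
    obtain ⟨x', hx'⟩ := exists_vertex_val h1 hvpos hvlt hg1
    have hxx : x'.1 = x := ZMod.val_injective n hx'
    obtain ⟨-, y, hy⟩ := x'.2
    exact ⟨y, hxx ▸ hy⟩

lemma card_zdv (h1 : 1 < n) : Nat.card (Zdv n) = n - 1 - n.totient := by
  haveI : NeZero n := ⟨by omega⟩
  haveI : Fact (1 < n) := ⟨h1⟩
  classical
  have e : Zdv n ≃ {x : ZMod n // x ≠ 0 ∧ ¬ IsUnit x} :=
    Equiv.subtypeEquivRight (mem_iff h1)
  rw [Nat.card_congr e, Nat.card_eq_fintype_card, Fintype.card_subtype]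
  have hq : (Finset.univ.filter fun x : ZMod n => x = 0 ∨ IsUnit x).card
      = 1 + n.totient := by
    rw [Finset.filter_or, Finset.card_union_of_disjoint]
    · congr 1
      · rw [Finset.filter_eq']
        simp
      · rw [← ZMod.card_units_eq_totient n, ← Fintype.card_subtype]
        exact Fintype.card_congr
          { toFun := fun x => x.2.unit
            invFun := fun u => ⟨↑u, u.isUnit⟩
            left_inv := fun x => Subtype.ext x.2.unit_spec
            right_inv := fun u => Units.ext (u.isUnit.unit_spec) }
    · rw [Finset.disjoint_left]
      intro a ha hb
      simp only [Finset.mem_filter] at ha hb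
      rw [ha.2] at hb
      exact not_isUnit_zero hb.2
  have htot := Finset.card_filter_add_card_filter_not
    (s := (Finset.univ : Finset (ZMod n))) (p := fun x : ZMod n => x = 0 ∨ IsUnit x)
  rw [hq] at htot
  have hcu : (Finset.univ : Finset (ZMod n)).card = n := by
    rw [Finset.card_univ, ZMod.card]
  have hfe : (Finset.univ.filter fun x : ZMod n => ¬(x = 0 ∨ IsUnit x))
      = (Finset.univ.filter fun x : ZMod n => x ≠ 0 ∧ ¬ IsUnit x) := by
    apply Finset.filter_congr
    intro x _
    tauto
  rw [hfe, hcu] at htot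
  omega

lemma val_inj_zdv (h1 : 1 < n) : Function.Injective (fun x : Zdv n => x.1.val) := by
  haveI : NeZero n := ⟨by omega⟩
  intro a b h
  exact Subtype.ext (ZMod.val_injective n h)

lemma image_reps (h1 : 1 < n) :
    (fun x : Zdv n => x.1.val) '' {x : Zdv n | x.1.val ∣ n}
      = ↑((Nat.divisors n).filter fun d => 1 < d ∧ d < n) := by
  ext m
  simp only [Set.mem_image, Set.mem_setOf_eq, Finset.coe_filter, Finset.mem_coe,
    Nat.mem_divisors, Set.mem_setOf_eq]
  constructor
  · rintro ⟨x, hx, rfl⟩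
    refine ⟨⟨hx, by omega⟩, ?_, val_lt h1 x⟩
    have h2 : cls x = x.1.val := by unfold cls; exact Nat.gcd_eq_left hx
    have := one_lt_cls h1 x
    omega
  · rintro ⟨⟨hdvd, -⟩, h1d, hdn⟩
    obtain ⟨x, hval, -⟩ := exists_vertex h1 hdvd h1d hdn
    exact ⟨x, hval ▸ hdvd, hval⟩

lemma ncard_reps (h1 : 1 < n) :
    {x : Zdv n | x.1.val ∣ n}.ncard
      = ((Nat.divisors n).filter fun d => 1 < d ∧ d < n).card := by
  rw [← Set.ncard_coe_finset, ← image_reps h1,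
    Set.ncard_image_of_injective _ (val_inj_zdv h1)]

lemma distinguish (h1 : 1 < n) {d e : ℕ} (hd : d ∣ n) (hd1 : 1 < d) (hdn : d < n)
    (he : e ∣ n) (he1 : 1 < e) (hen : e < n) (hde : d ≠ e) :
    ∃ f, f ∣ n ∧ 1 < f ∧ 2 * f < n ∧
      ((n ∣ d * f ∧ ¬ n ∣ e * f) ∨ (n ∣ e * f ∧ ¬ n ∣ d * f)) := by
  have mk : ∀ c : ℕ, c ∣ n → c < n → 3 ≤ c →
      (n / c ∣ n ∧ 1 < n / c ∧ 2 * (n / c) < n ∧ n ∣ c * (n / c)) := by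
    intro c hc hcn hc3
    obtain ⟨k, hk⟩ := hc
    have hkval : n / c = k := by rw [hk, Nat.mul_div_cancel_left _ (by omega)]
    have hk2 : 2 ≤ k := by
      rcases Nat.lt_or_ge k 2 with h | h
      · interval_cases k <;> omega
      · exact h
    refine ⟨⟨c, by rw [hkval, hk]; ring⟩, by omega, by nlinarith, ?_⟩
    rw [Nat.mul_div_cancel' ⟨k, hk⟩]
  have himp : ∀ c c' : ℕ, c ∣ n → n ∣ c' * (n / c) → c ∣ c' := by
    intro c c' hc hdvd
    have hc0 : 0 < c := by
      rcases Nat.eq_zero_or_pos c with h | h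
      · subst h; simp at hc; omega
      · exact h
    obtain ⟨t, ht⟩ := hdvd
    have hmul : c' * (n / c) * c = c' * n := by rw [mul_assoc, Nat.div_mul_cancel hc]
    have h2 : c' * n = n * (t * c) := by rw [← hmul, ht]; ring
    have h3 : c' = t * c := by
      have hn0 : 0 < n := by omega
      apply Nat.eq_of_mul_eq_mul_left hn0
      rw [mul_comm n c', h2]
    exact ⟨t, by rw [h3]; ring⟩
  rcases Nat.lt_or_ge d 3 with hd3 | hd3
  · have he3 : 3 ≤ e := by omega
    obtain ⟨hfd, hf1, hf2, hfe⟩ := mk e he hen he3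
    refine ⟨n / e, hfd, hf1, hf2, Or.inr ⟨hfe, fun hcon => ?_⟩⟩
    have h4 := himp e d he hcon
    have := Nat.le_of_dvd (by omega) h4
    omega
  · rcases Nat.lt_or_ge e 3 with he3 | he3
    · obtain ⟨hfd, hf1, hf2, hff⟩ := mk d hd hdn hd3
      refine ⟨n / d, hfd, hf1, hf2, Or.inl ⟨hff, fun hcon => ?_⟩⟩
      have h4 := himp d e hd hcon
      have := Nat.le_of_dvd (by omega) h4
      omega
    · obtain ⟨hfd, hf1, hf2, hff⟩ := mk d hd hdn hd3
      by_cases hcon : n ∣ e * (n / d)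
      · have hdve := himp d e hd hcon
        obtain ⟨hfd', hf1', hf2', hfe'⟩ := mk e he hen he3
        refine ⟨n / e, hfd', hf1', hf2', Or.inr ⟨hfe', fun hcon2 => ?_⟩⟩
        exact hde (Nat.dvd_antisymm hdve (himp e d he hcon2))
      · exact ⟨n / d, hfd, hf1, hf2, Or.inl ⟨hff, hcon⟩⟩

lemma lower_bound (h1 : 1 < n) (S : Set (Zdv n)) (hres : IsResolving (zdg n) S) :
    Nat.card (Zdv n) - ((Nat.divisors n).filter fun d => 1 < d ∧ d < n).card
      ≤ S.ncard := by
  haveI : NeZero n := ⟨by omega⟩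
  have hinj : Set.InjOn cls Sᶜ := by
    intro u hu v hv hcls
    by_contra hne
    refine hne (hres u v fun w hw => ?_)
    exact dist_swap h1 hcls w (fun h => hu (h ▸ hw)) (fun h => hv (h ▸ hw))
  have himsub : cls '' Sᶜ ⊆ ↑((Nat.divisors n).filter fun d => 1 < d ∧ d < n) := by
    rintro m ⟨x, -, rfl⟩
    simp only [Finset.coe_filter, Finset.mem_coe, Nat.mem_divisors, Set.mem_setOf_eq]
    exact ⟨⟨cls_dvd x, by omega⟩, one_lt_cls h1 x, cls_lt h1 x⟩
  have hTcard : Sᶜ.ncard ≤ ((Nat.divisors n).filter fun d => 1 < d ∧ d < n).card := by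
    calc Sᶜ.ncard = (cls '' Sᶜ).ncard := (Set.ncard_image_of_injOn hinj).symm
    _ ≤ (↑((Nat.divisors n).filter fun d => 1 < d ∧ d < n) : Set ℕ).ncard :=
        Set.ncard_le_ncard himsub (Set.toFinite _)
    _ = _ := Set.ncard_coe_finset _
  have hsum := Set.ncard_add_ncard_compl S
  omega

lemma upper_bound (h1 : 1 < n) : IsResolving (zdg n) {x : Zdv n | ¬ x.1.val ∣ n} := by
  haveI : NeZero n := ⟨by omega⟩
  intro u v H
  by_contra hne
  by_cases hu : ¬ u.1.val ∣ n
  · have h0 := H u hu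
    rw [SimpleGraph.dist_self] at h0
    exact hne (((reachable_all h1 v u).dist_eq_zero_iff.mp h0.symm).symm)
  by_cases hv : ¬ v.1.val ∣ n
  · have h0 := H v hv
    rw [SimpleGraph.dist_self] at h0
    exact hne ((reachable_all h1 u v).dist_eq_zero_iff.mp h0)
  push_neg at hu hv
  have hclsu : cls u = u.1.val := Nat.gcd_eq_left hu
  have hclsv : cls v = v.1.val := Nat.gcd_eq_left hv
  have hd1 : 1 < u.1.val := hclsu ▸ one_lt_cls h1 u
  have he1 : 1 < v.1.val := hclsv ▸ one_lt_cls h1 v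
  have hde : u.1.val ≠ v.1.val := fun h => hne (Subtype.ext (ZMod.val_injective n h))
  obtain ⟨f, hfdvd, hf1, hf2, hxor⟩ :=
    distinguish h1 hu hd1 (val_lt h1 u) hv he1 (val_lt h1 v) hde
  obtain ⟨w, hwcls, hwrep⟩ := exists_nonrep h1 hfdvd hf1 hf2
  have hH := H w hwrep
  have hune : u ≠ w := fun h => hwrep (h ▸ hu)
  have hvne : v ≠ w := fun h => hwrep (h ▸ hv)
  rcases hxor with ⟨hdf, hef⟩ | ⟨hef, hdf⟩
  · have hd1' : (zdg n).dist u w = 1 := SimpleGraph.dist_eq_one_iff_adj.2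
      ((adj_iff h1 u w).2 ⟨hune, by rw [hclsu, hwcls]; exact hdf⟩)
    rw [hd1'] at hH
    have hadj := (adj_iff h1 v w).1 (SimpleGraph.dist_eq_one_iff_adj.1 hH.symm)
    rw [hclsv, hwcls] at hadj
    exact hef hadj.2
  · have hd1' : (zdg n).dist v w = 1 := SimpleGraph.dist_eq_one_iff_adj.2
      ((adj_iff h1 v w).2 ⟨hvne, by rw [hclsv, hwcls]; exact hef⟩)
    rw [hd1'] at hH
    have hadj := (adj_iff h1 u w).1 (SimpleGraph.dist_eq_one_iff_adj.1 hH)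
    rw [hclsu, hwcls] at hadj
    exact hdf hadj.2

end MdimZdg

theorem mdim_zdg_zmod (n : ℕ) (h1 : 1 < n) (hn : ¬ n.Prime) :
    mdim (zdg n) =
      n - Nat.totient n - ((Nat.divisors n).filter fun d => 1 < d ∧ d < n).card - 1 := by
  haveI : NeZero n := ⟨by omega⟩
  classical
  set τ := ((Nat.divisors n).filter fun d => 1 < d ∧ d < n).card with hτ
  have hcard : Nat.card (Zdv n) = n - 1 - n.totient := MdimZdg.card_zdv h1
  set S : Set (Zdv n) := {x : Zdv n | ¬ x.1.val ∣ n} with hS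
  have hSncard : S.ncard = Nat.card (Zdv n) - τ := by
    have h2 := Set.ncard_add_ncard_compl {x : Zdv n | x.1.val ∣ n}
    have hR := MdimZdg.ncard_reps h1
    have hcompl : {x : Zdv n | x.1.val ∣ n}ᶜ = S := by
      ext x; simp [hS]
    rw [hcompl] at h2
    omega
  have hmem : Nat.card (Zdv n) - τ ∈
      {m | ∃ S : Set (Zdv n), S.Finite ∧ S.ncard = m ∧ IsResolving (zdg n) S} :=
    ⟨S, Set.toFinite S, hSncard, MdimZdg.upper_bound h1⟩
  have hlb : ∀ m ∈
      {m | ∃ S : Set (Zdv n), S.Finite ∧ S.ncard = m ∧ IsResolving (zdg n) S},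
      Nat.card (Zdv n) - τ ≤ m := by
    rintro m ⟨S', -, rfl, hres'⟩
    exact MdimZdg.lower_bound h1 S' hres'
  have hm : mdim (zdg n) = Nat.card (Zdv n) - τ := by
    unfold mdim
    exact le_antisymm (Nat.sInf_le hmem) (le_csInf ⟨_, hmem⟩ hlb)
  rw [hm, hcard]
  omega
end

section
/- The automorphism group of the zero-divisor graph Γ(Z_n) is isomorphic to the direct product over all proper divisors d of n of the symmetric groups on φ(n/d) letters. -/
/-!
Label a vertex `x` by `d = gcd(n, x)`, a proper divisor of `n`. Since `x * y = 0` iff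
`n ∣ gcd(n, x) * gcd(n, y)`, adjacency depends only on the labels, so every label-preserving
permutation is an automorphism. Conversely, the annihilators of `x` are the `d - 1` nonzero
multiples of `n / d`, so `x` has degree `d - 1 - [n ∣ d²]`, and this determines `d`: two labels
with equal degree would be `e` and `e + 1` with `e ∣ n ∣ (e + 1)²`, impossible for coprime
`e > 1` and `e + 1`. Hence the automorphism group is the product of the symmetric groups on the
label classes, and the class of `d` has `φ(n / d)` elements.
-/

open Equiv Finset

namespace SimpleGraph

variable {V ι : Type*} (G : SimpleGraph V) (f : V → ι)

def autMulEquivPiPermFiber (R : ι → ι → Prop) (hadj : ∀ x y, G.Adj x y ↔ x ≠ y ∧ R (f x) (f y))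
    (hf : ∀ (φ : G ≃g G) x, f (φ x) = f x) : (G ≃g G) ≃* ∀ i, Perm {x // f x = i} where
  toFun φ i := Perm.subtypePerm φ.toEquiv fun x => by simp [hf]
  invFun σ :=
    { toEquiv := ofFiberEquiv σ
      map_rel_iff' := by
        intro x y
        simp only [hadj, ofFiberEquiv_map, (ofFiberEquiv σ).injective.ne_iff] }
  left_inv φ := rfl
  right_inv σ := by
    ext i ⟨x, rfl⟩
    rfl
  map_mul' φ ψ := rfl

end SimpleGraph

lemma Nat.card_filter_range_ne_zero_dvd {m n : ℕ} (h : m ∣ n) :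
    #{k ∈ range n | k ≠ 0 ∧ m ∣ k} = n / m - 1 := by
  cases n with
  | zero => simp
  | succ N => rw [Nat.card_multiples', Nat.succ_div, if_pos h, Nat.add_sub_cancel]

lemma Nat.injOn_sub_one_sub_ite_dvd_mul_self (n : ℕ) :
    Set.InjOn (fun d => d - 1 - if n ∣ d * d then 1 else 0) {d | d ∣ n ∧ 1 < d} := by
  have no_gap : ∀ a b, b ∣ n → 1 < b → n ∣ a * a → a ≠ b + 1 := by
    rintro a b hb hb1 ha rfl
    have hcop : b.Coprime (b + 1) := Nat.coprime_self_add_right.2 (Nat.coprime_one_right b)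
    have := (hcop.mul_right hcop).eq_one_of_dvd (hb.trans ha)
    omega
  rintro d ⟨hd, hd1⟩ e ⟨he, he1⟩ h
  simp only at h
  split_ifs at h with hdd hee hee
  · omega
  · exact absurd (by omega) (no_gap d e he he1 hdd)
  · exact absurd (by omega) (no_gap e d hd hd1 hee)
  · omega

namespace ZMod

variable {n : ℕ} [NeZero n]

lemma mul_eq_zero_iff_dvd_val_mul_val_s9 (x y : ZMod n) : x * y = 0 ↔ n ∣ x.val * y.val := by
  rw [← natCast_eq_zero_iff, Nat.cast_mul, natCast_zmod_val, natCast_zmod_val]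

lemma mul_eq_zero_iff_dvd_gcd_mul_gcd (x y : ZMod n) :
    x * y = 0 ↔ n ∣ n.gcd x.val * n.gcd y.val := by
  rw [Nat.dvd_gcd_mul_iff_dvd_mul, mul_comm x.val, Nat.dvd_gcd_mul_iff_dvd_mul, mul_comm,
    mul_eq_zero_iff_dvd_val_mul_val_s9]

lemma mul_eq_zero_iff_div_gcd_dvd (x y : ZMod n) : x * y = 0 ↔ n / n.gcd x.val ∣ y.val := by
  rw [Nat.div_dvd_iff_dvd_mul (Nat.gcd_dvd_left _ _) (Nat.gcd_pos_of_pos_left _ (NeZero.pos n)),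
    Nat.dvd_gcd_mul_iff_dvd_mul, mul_eq_zero_iff_dvd_val_mul_val_s9]

lemma card_subtype_val (p : ℕ → Prop) [DecidablePred p] :
    Nat.card {x : ZMod n // p x.val} = #{k ∈ range n | p k} := by
  classical
  rw [Nat.card_eq_fintype_card, Fintype.card_subtype]
  refine card_nbij' val (fun k => (k : ZMod n)) ?_ ?_ ?_ ?_
  · intro x hx
    simpa [val_lt] using hx
  · intro k hk
    simp only [coe_filter, mem_range, Set.mem_ofPred_eq] at hk
    simp [val_cast_of_lt hk.1, hk.2]
  · intro x _
    exact natCast_zmod_val x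
  · intro k hk
    simp only [coe_filter, mem_range, Set.mem_ofPred_eq] at hk
    exact val_cast_of_lt hk.1

end ZMod

namespace Zdv

def label {n : ℕ} (x : Zdv n) : ℕ := n.gcd x.1.val

lemma label_dvd {n : ℕ} (x : Zdv n) : label x ∣ n := Nat.gcd_dvd_left _ _

variable {n : ℕ} [NeZero n]

lemma mul_eq_zero_iff_dvd_label_mul_label (x y : Zdv n) :
    x.1 * y.1 = 0 ↔ n ∣ label x * label y :=
  ZMod.mul_eq_zero_iff_dvd_gcd_mul_gcd x.1 y.1

lemma adj_iff (x y : Zdv n) : (zdg n).Adj x y ↔ x ≠ y ∧ n ∣ label x * label y := by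
  rw [zdg, SimpleGraph.fromRel_adj, mul_comm y.1, or_self, mul_eq_zero_iff_dvd_label_mul_label]

lemma one_lt_label (x : Zdv n) : 1 < label x := by
  obtain ⟨hx, y, hy, hxy⟩ := x.2
  have hne_one : label x ≠ 1 := by
    intro h
    have hunit : IsUnit x.1 := by
      rw [← ZMod.natCast_zmod_val x.1, ZMod.isUnit_iff_coprime, Nat.coprime_comm]
      exact h
    exact hy (hunit.mul_right_eq_zero.1 hxy)
  have hne_zero : label x ≠ 0 := (Nat.gcd_pos_of_pos_left _ (Nat.pos_of_neZero n)).ne'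
  omega

lemma label_lt (x : Zdv n) : label x < n := by
  have hval : x.1.val ≠ 0 := (ZMod.val_ne_zero x.1).2 x.2.1
  exact (Nat.le_of_dvd (Nat.pos_of_ne_zero hval) (Nat.gcd_dvd_right _ _)).trans_lt
    (ZMod.val_lt x.1)

def labelDivisor (x : Zdv n) : {d : ℕ // d ∣ n ∧ 1 < d ∧ d < n} :=
  ⟨label x, label_dvd x, one_lt_label x, label_lt x⟩

lemma card_labelDivisor_eq (d : {d : ℕ // d ∣ n ∧ 1 < d ∧ d < n}) :
    Nat.card {x : Zdv n // labelDivisor x = d} = Nat.totient (n / d) := by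
  obtain ⟨d, hd, hd1, hdn⟩ := d
  have hdiv_lt : n / d < n := Nat.div_lt_self (Nat.pos_of_neZero n) hd1
  have hvertex : ∀ {y : ZMod n}, n.gcd y.val = d → y ≠ 0 ∧ ∃ z : ZMod n, z ≠ 0 ∧ y * z = 0 := by
    intro y hy
    refine ⟨?_, ((n / d : ℕ) : ZMod n), ?_, ?_⟩
    · rintro rfl
      rw [ZMod.val_zero, Nat.gcd_zero_right] at hy
      omega
    · rw [Ne, ZMod.natCast_eq_zero_iff]
      exact fun h => hdiv_lt.not_ge (Nat.le_of_dvd (Nat.div_pos hdn.le (by omega)) h)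
    · rw [ZMod.mul_eq_zero_iff_dvd_gcd_mul_gcd, hy, ZMod.val_cast_of_lt hdiv_lt,
        Nat.gcd_eq_right (Nat.div_dvd_of_dvd hd), Nat.mul_div_cancel' hd]
  rw [Nat.totient_div_of_dvd hd, ← ZMod.card_subtype_val (n.gcd · = d)]
  exact Nat.card_congr ((subtypeEquivRight fun x => Subtype.ext_iff).trans
    (subtypeSubtypeEquivSubtype hvertex))

lemma ncard_annihilator (x : Zdv n) : {z : Zdv n | x.1 * z.1 = 0}.ncard = label x - 1 := by
  have hvertex : ∀ {y : ZMod n}, y.val ≠ 0 ∧ n / label x ∣ y.val →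
      y ≠ 0 ∧ ∃ z : ZMod n, z ≠ 0 ∧ y * z = 0 := by
    rintro y ⟨hy, hxy⟩
    refine ⟨(ZMod.val_ne_zero y).1 hy, x.1, x.2.1, ?_⟩
    rw [mul_comm, ZMod.mul_eq_zero_iff_div_gcd_dvd]
    exact hxy
  rw [← Nat.card_coe_set_eq, ← Nat.div_div_self (label_dvd x) (NeZero.ne n),
    ← Nat.card_filter_range_ne_zero_dvd (Nat.div_dvd_of_dvd (label_dvd x)),
    ← ZMod.card_subtype_val (fun k => k ≠ 0 ∧ n / label x ∣ k)]
  refine Nat.card_congr ((subtypeEquivRight fun z => ?_).trans (subtypeSubtypeEquivSubtype hvertex))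
  simp [ZMod.mul_eq_zero_iff_div_gcd_dvd, (ZMod.val_ne_zero z.1).2 z.2.1, label]

lemma card_neighborSet (x : Zdv n) :
    Nat.card ((zdg n).neighborSet x) = label x - 1 - if n ∣ label x * label x then 1 else 0 := by
  have hN : (zdg n).neighborSet x = {z | x.1 * z.1 = 0} \ {x} := by
    ext z
    simp [zdg, mul_comm z.1, eq_comm, and_comm]
  rw [Nat.card_coe_set_eq, hN, ← ncard_annihilator x]
  by_cases hx : x ∈ {z : Zdv n | x.1 * z.1 = 0}
  · rw [Set.ncard_sdiff_singleton_of_mem hx,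
      if_pos ((mul_eq_zero_iff_dvd_label_mul_label x x).1 hx)]
  · rw [Set.sdiff_singleton_eq_self hx,
      if_neg (mt (mul_eq_zero_iff_dvd_label_mul_label x x).2 hx), Nat.sub_zero]

lemma label_apply_iso (φ : zdg n ≃g zdg n) (x : Zdv n) : label (φ x) = label x :=
  Nat.injOn_sub_one_sub_ite_dvd_mul_self n ⟨label_dvd _, one_lt_label _⟩
    ⟨label_dvd _, one_lt_label _⟩ <| by
      simpa only [card_neighborSet] using (Nat.card_congr (φ.mapNeighborSet x)).symm

end Zdv

theorem aut_zdg_zmod_general (n : ℕ) (h1 : 1 < n) :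
    Nonempty ((zdg n ≃g zdg n) ≃*
      ∀ d : {d : ℕ // d ∣ n ∧ 1 < d ∧ d < n}, Equiv.Perm (Fin (Nat.totient (n / d.1)))) := by
  have : NeZero n := ⟨by omega⟩
  have hlabel : ∀ (φ : zdg n ≃g zdg n) x, Zdv.labelDivisor (φ x) = Zdv.labelDivisor x :=
    fun φ x => Subtype.ext (Zdv.label_apply_iso φ x)
  exact ⟨(SimpleGraph.autMulEquivPiPermFiber (zdg n) Zdv.labelDivisor (fun d e => n ∣ d.1 * e.1)
    Zdv.adj_iff hlabel).trans <| MulEquiv.piCongrRight fun d =>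
      (Finite.equivFinOfCardEq (Zdv.card_labelDivisor_eq d)).permCongrHom⟩

theorem aut_zdg_zmod (n : ℕ) (h1 : 1 < n) (hn : ¬ n.Prime) :
    Nonempty ((zdg n ≃g zdg n) ≃*
      ∀ d : {d : ℕ // d ∣ n ∧ 1 < d ∧ d < n}, Equiv.Perm (Fin (Nat.totient (n / d.1)))) :=
  aut_zdg_zmod_general n h1
end

section
/- Let O_1,...,O_k be the vertex orbits of a graph Γ under Aut(Γ), and let S_i be a determining set of the subgraph of Γ induced by O_i. Then the union of the S_i is a determining set of Γ. -/
theorem union_of_orbit_determining_sets {V : Type*} (Γ : SimpleGraph V) {ι : Type*}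
    (O : ι → Set V)
    (hcover : ∀ v : V, ∃ i, v ∈ O i)
    (horb : ∀ i, ∀ u ∈ O i, O i = {w : V | ∃ σ : Γ ≃g Γ, σ u = w})
    (S : ∀ i, Set (O i))
    (hdet : ∀ i, IsDetermining (SimpleGraph.induce (O i) Γ) (S i)) :
    IsDetermining Γ (⋃ i, Subtype.val '' S i) := by
  intro σ hfix v
  obtain ⟨i, hv⟩ := hcover v
  have horbi := horb i v hv
  -- σ and σ.symm preserve O i
  have hpres : ∀ w ∈ O i, σ w ∈ O i := by
    intro w hw
    rw [horbi] at hw ⊢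
    obtain ⟨τ, hτ⟩ := hw
    exact ⟨τ.trans σ, by simp [hτ]⟩
  have hpres' : ∀ w ∈ O i, σ.symm w ∈ O i := by
    intro w hw
    rw [horbi] at hw ⊢
    obtain ⟨τ, hτ⟩ := hw
    exact ⟨τ.trans σ.symm, by simp [hτ]⟩
  -- restrict σ to an automorphism of the induced subgraph
  let σ' : SimpleGraph.induce (O i) Γ ≃g SimpleGraph.induce (O i) Γ :=
    { toFun := fun x => ⟨σ x, hpres x x.2⟩
      invFun := fun x => ⟨σ.symm x, hpres' x x.2⟩
      left_inv := fun x => by simp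
      right_inv := fun x => by simp
      map_rel_iff' := by
        intro a b
        simpa [SimpleGraph.comap] using σ.map_adj_iff }
  have h := hdet i σ' (fun s hs => by
    have : (s : V) ∈ ⋃ j, Subtype.val '' S j := Set.mem_iUnion.2 ⟨i, ⟨s, hs, rfl⟩⟩
    exact Subtype.ext (hfix _ this)) ⟨v, hv⟩
  exact congrArg Subtype.val h
end

section
/- For a commutative ring R with 1, the set of nonzero zero-divisors Z(R) is finite (possibly empty) if and only if R is finite or R is an integral domain. -/
/-- The set of nonzero zero-divisors of a commutative ring `R`. -/
def zdvSet (R : Type*) [CommRing R] : Set R :=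
  {x : R | x ≠ 0 ∧ ∃ y : R, y ≠ 0 ∧ x * y = 0}

/-- The nonzero zero-divisors of `R`, the vertex set of the zero-divisor graph. -/
abbrev ZdvR (R : Type*) [CommRing R] : Type _ := ↥(zdvSet R)

/-- The zero-divisor graph of a commutative ring `R`. -/
def zdgR (R : Type*) [CommRing R] : SimpleGraph (ZdvR R) :=
  SimpleGraph.fromRel (fun x y => x.1 * y.1 = 0)

theorem zdvSet_finite_iff (R : Type*) [CommRing R] :
    (zdvSet R).Finite ↔ Finite R ∨ IsDomain R := by
  constructor
  · intro h
    by_cases hne : (zdvSet R).Nonempty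
    · -- Ganesan's theorem: Z(R) finite nonempty ⇒ R finite
      obtain ⟨a, ha0, b, hb0, hab⟩ := hne
      left
      set S : Set R := zdvSet R ∪ {0} with hSdef
      have hS : S.Finite := h.union (Set.finite_singleton 0)
      have hann : {r : R | r * b = 0} ⊆ S := by
        intro r hr
        by_cases hr0 : r = 0
        · exact Or.inr (by simp [hr0])
        · exact Or.inl ⟨hr0, b, hb0, hr⟩
      have hannF : ({r : R | r * b = 0}).Finite := hS.subset hann
      have hcov : (Set.univ : Set R) ⊆ ⋃ s ∈ S, {r : R | r * b = s} := by
        intro r _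
        have hmem : r * b ∈ S := by
          by_cases h0 : r * b = 0
          · exact Or.inr (by simp [h0])
          · refine Or.inl ⟨h0, a, ha0, ?_⟩
            rw [mul_assoc, mul_comm b a, hab, mul_zero]
        exact Set.mem_biUnion hmem rfl
      have hfin : (Set.univ : Set R).Finite := by
        refine Set.Finite.subset (Set.Finite.biUnion hS ?_) hcov
        intro s _
        by_cases hs : ({r : R | r * b = s}).Nonempty
        · obtain ⟨r0, hr0⟩ := hs
          have hsub : {r : R | r * b = s} ⊆ (fun t => t + r0) '' {r : R | r * b = 0} := by
            intro r hr
            refine ⟨r - r0, ?_, by ring⟩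
            simp only [Set.mem_setOf_eq] at hr hr0 ⊢
            rw [sub_mul, hr, hr0, sub_self]
          exact ((hannF.image _).subset hsub)
        · rw [Set.not_nonempty_iff_eq_empty] at hs
          rw [hs]; exact Set.finite_empty
      exact Set.finite_univ_iff.mp hfin
    · -- Z(R) empty: trivial ring or domain
      rw [Set.not_nonempty_iff_eq_empty] at hne
      by_cases htriv : (0 : R) = 1
      · left
        have : Subsingleton R := subsingleton_of_zero_eq_one htriv
        exact Finite.of_subsingleton
      · right
        have : Nontrivial R := ⟨0, 1, htriv⟩
        have hnzd : NoZeroDivisors R := by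
          constructor
          intro x y hxy
          by_contra hc
          push_neg at hc
          obtain ⟨hx, hy⟩ := hc
          have : x ∈ zdvSet R := ⟨hx, y, hy, hxy⟩
          rw [hne] at this
          exact this
        exact NoZeroDivisors.to_isDomain R
  · rintro (hfin | hdom)
    · exact Set.toFinite _
    · have : zdvSet R = ∅ := by
        ext x
        simp only [zdvSet, Set.mem_setOf_eq, Set.mem_empty_iff_false, iff_false, not_and]
        rintro hx ⟨y, hy, hxy⟩
        rcases mul_eq_zero.mp hxy with h | h
        · exact hx h
        · exact hy h
      rw [this]; exact Set.finite_empty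
end

section
/- Let R be the finite semisimple ring F_1 × ... × F_k (k ≥ 2, each F_i a finite field) with some F_i not isomorphic to Z_2. Then the determining number of the zero-divisor graph Γ(R) equals |Z(R)| − 2^k + 2. -/
open scoped Classical
set_option linter.unusedSectionVars false

section Aux
variable {k : ℕ} {F : Fin k → Type*} [∀ i, Field (F i)] [∀ i, Fintype (F i)]

noncomputable def psupp (x : ∀ i, F i) : Finset (Fin k) :=
  Finset.univ.filter (fun i => x i ≠ 0)

lemma mem_psupp {x : ∀ i, F i} {i : Fin k} : i ∈ psupp x ↔ x i ≠ 0 := by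
  simp [psupp]

lemma psupp_empty {x : ∀ i, F i} : psupp x = ∅ ↔ x = 0 := by
  simp [Finset.eq_empty_iff_forall_notMem, mem_psupp, funext_iff]

lemma mul_zero_iff {x y : ∀ i, F i} : x * y = 0 ↔ psupp x ∩ psupp y = ∅ := by
  simp only [Finset.eq_empty_iff_forall_notMem, Finset.mem_inter, mem_psupp, funext_iff]
  constructor
  · intro h i hi
    rcases mul_eq_zero.1 (h i) with h' | h'
    · exact hi.1 h'
    · exact hi.2 h'
  · intro h i
    by_cases h1 : x i = 0
    · simp [h1]
    · by_cases h2 : y i = 0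
      · simp [h2]
      · exact absurd ⟨h1, h2⟩ (h i)

lemma mem_zdv_iff {x : ∀ i, F i} :
    x ∈ zdvSet (∀ i, F i) ↔ psupp x ≠ ∅ ∧ psupp x ≠ Finset.univ := by
  constructor
  · rintro ⟨hx0, y, hy0, hxy⟩
    refine ⟨by simpa [psupp_empty] using hx0, ?_⟩
    obtain ⟨i, hi⟩ : ∃ i, y i ≠ 0 := by
      by_contra h; push_neg at h; exact hy0 (funext h)
    have : x i * y i = 0 := congrFun hxy i
    have hxi : x i = 0 := by
      rcases mul_eq_zero.1 this with h | h
      · exact h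
      · exact absurd h hi
    intro hu
    have : i ∈ psupp x := hu ▸ Finset.mem_univ i
    exact mem_psupp.1 this hxi
  · rintro ⟨h1, h2⟩
    refine ⟨by simpa [psupp_empty] using h1, ?_⟩
    obtain ⟨i, hi⟩ : ∃ i, x i = 0 := by
      by_contra h; push_neg at h
      exact h2 (Finset.eq_univ_iff_forall.2 fun i => mem_psupp.2 (h i))
    refine ⟨Pi.single i 1, ?_, ?_⟩
    · intro h
      have := congrFun h i
      simp at this
    · funext j
      by_cases hj : j = i
      · subst hj; simp [hi]
      · simp [Pi.single_eq_of_ne hj]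

lemma adj_iff {v w : ZdvR (∀ i, F i)} :
    (zdgR (∀ i, F i)).Adj v w ↔ psupp v.1 ∩ psupp w.1 = ∅ := by
  rw [zdgR, SimpleGraph.fromRel_adj]
  constructor
  · rintro ⟨-, h | h⟩
    · exact mul_zero_iff.1 h
    · rw [Finset.inter_comm]; exact mul_zero_iff.1 h
  · intro h
    have hv := (mem_zdv_iff.1 v.2).1
    refine ⟨?_, Or.inl (mul_zero_iff.2 h)⟩
    obtain ⟨i, hi⟩ := Finset.nonempty_iff_ne_empty.2 hv
    intro he
    subst he
    rw [Finset.inter_self] at h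
    exact Finset.notMem_empty i (h ▸ hi)

noncomputable def eA (A : Finset (Fin k)) : ∀ i, F i := fun i => if i ∈ A then 1 else 0

lemma psupp_eA (A : Finset (Fin k)) : psupp (F := F) (eA A) = A := by
  ext i; by_cases h : i ∈ A <;> simp [mem_psupp, eA, h]

/-- The candidate minimum determining set: all vertices that are not the canonical
representative of their support class. -/
def Sdet : Set (ZdvR (∀ i, F i)) := {v | v.1 ≠ eA (psupp v.1)}

lemma exists_S_rep (C : Finset (Fin k)) (hC1 : C ≠ ∅) (hC2 : C ≠ Finset.univ)
    (i : Fin k) (hiC : i ∈ C) (hcard : 2 < Fintype.card (F i)) :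
    ∃ u : ZdvR (∀ j, F j), u ∈ Sdet ∧ psupp u.1 = C := by
  obtain ⟨c, hc0, hc1⟩ : ∃ c : F i, c ≠ 0 ∧ c ≠ 1 := by
    by_contra h; push_neg at h
    have hsub : (Finset.univ : Finset (F i)) ⊆ {0, 1} := by
      intro c _
      rcases (em (c = 0)) with h0 | h0
      · simp [h0]
      · simp [h c h0]
    have := Finset.card_le_card hsub
    have h2 : ({0, 1} : Finset (F i)).card ≤ 2 :=
      (Finset.card_insert_le _ _).trans (by simp)
    rw [Finset.card_univ] at this
    omega
  set x : ∀ j, F j := Function.update (eA C) i c with hx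
  have hxi : x i = c := Function.update_self i c _
  have hxj : ∀ j, j ≠ i → x j = eA C j := fun j hj => Function.update_of_ne hj c _
  have hsx : psupp x = C := by
    ext j
    by_cases hj : j = i
    · subst hj
      simp [mem_psupp, hxi, hc0, hiC]
    · rw [mem_psupp, hxj j hj]
      by_cases hjC : j ∈ C <;> simp [eA, hjC]
  have hxZ : x ∈ zdvSet (∀ j, F j) := mem_zdv_iff.2 ⟨by rw [hsx]; exact hC1, by rw [hsx]; exact hC2⟩
  refine ⟨⟨x, hxZ⟩, ?_, hsx⟩
  intro hmem
  have hmem' : x = eA (psupp x) := hmem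
  have : x i = eA (psupp x) i := congrFun hmem' i
  rw [hxi, hsx] at this
  simp [eA, hiC] at this
  exact hc1 this

lemma psupp_subset_of_nbhd (hk : 2 ≤ k) {x y : ZdvR (∀ i, F i)}
    (h : ∀ w, (zdgR (∀ i, F i)).Adj x w ↔ (zdgR (∀ i, F i)).Adj y w) :
    psupp x.1 ⊆ psupp y.1 := by
  intro i hi
  by_contra hiy
  have hz : eA {i} ∈ zdvSet (∀ j, F j) := by
    refine mem_zdv_iff.2 ⟨by simp [psupp_eA], ?_⟩
    rw [psupp_eA]
    intro hu
    have := congrArg Finset.card hu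
    simp [Finset.card_univ] at this
    omega
  set z : ZdvR (∀ j, F j) := ⟨eA {i}, hz⟩ with hzdef
  have hyz : (zdgR (∀ j, F j)).Adj y z := by
    rw [adj_iff]
    show psupp y.1 ∩ psupp (eA {i}) = ∅
    rw [psupp_eA]
    exact Finset.inter_singleton_of_notMem hiy
  have hxz := (h z).2 hyz
  rw [adj_iff] at hxz
  have : i ∈ psupp x.1 ∩ psupp z.1 := by
    rw [Finset.mem_inter]
    exact ⟨hi, by show i ∈ psupp (eA {i}); rw [psupp_eA]; exact Finset.mem_singleton_self i⟩
  rw [hxz] at this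
  exact Finset.notMem_empty i this

lemma twin_supp (hk : 2 ≤ k) {x y : ZdvR (∀ i, F i)}
    (h : ∀ w, (zdgR (∀ i, F i)).Adj x w ↔ (zdgR (∀ i, F i)).Adj y w) :
    psupp x.1 = psupp y.1 :=
  Finset.Subset.antisymm (psupp_subset_of_nbhd hk h)
    (psupp_subset_of_nbhd hk (fun w => (h w).symm))

lemma U1 {σ : zdgR (∀ i, F i) ≃g zdgR (∀ i, F i)} (hσ : ∀ v ∈ Sdet, σ v = v)
    {C : Finset (Fin k)} (hC1 : C ≠ ∅) (hC2 : C ≠ Finset.univ)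
    {i : Fin k} (hiC : i ∈ C) (hcard : 2 < Fintype.card (F i))
    (v : ZdvR (∀ i, F i)) : psupp (σ v).1 ∩ C = ∅ ↔ psupp v.1 ∩ C = ∅ := by
  obtain ⟨u, huS, huC⟩ := exists_S_rep C hC1 hC2 i hiC hcard
  have hu := hσ u huS
  have h1 : (zdgR (∀ i, F i)).Adj (σ v) u ↔ (zdgR (∀ i, F i)).Adj v u := by
    conv_lhs => rw [← hu]
    exact σ.map_adj_iff
  rw [adj_iff, adj_iff, huC] at h1
  exact h1

lemma U2 (hk : 2 ≤ k) {σ : zdgR (∀ i, F i) ≃g zdgR (∀ i, F i)} (hσ : ∀ v ∈ Sdet, σ v = v)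
    (v : ZdvR (∀ i, F i)) {i : Fin k} (hi : i ∈ psupp v.1) (hcard : 2 < Fintype.card (F i)) :
    psupp (σ v).1 = psupp v.1 := by
  obtain ⟨hne, hnu⟩ := mem_zdv_iff.1 v.2
  obtain ⟨u, huS, huC⟩ := exists_S_rep (psupp v.1) hne hnu i hi hcard
  have hu := hσ u huS
  have h1 : ∀ w, (zdgR (∀ i, F i)).Adj v w ↔ (zdgR (∀ i, F i)).Adj u w := fun w => by
    rw [adj_iff, adj_iff, huC]
  have h2 : ∀ w, (zdgR (∀ i, F i)).Adj (σ v) w ↔ (zdgR (∀ i, F i)).Adj (σ u) w := fun w => by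
    conv_lhs => rw [← σ.apply_symm_apply w]
    conv_rhs => rw [← σ.apply_symm_apply w]
    rw [σ.map_adj_iff, σ.map_adj_iff]
    exact h1 _
  have := twin_supp hk h2
  rw [this, hu, huC]
lemma Uhalf (hF : ∃ i, 2 < Fintype.card (F i))
    {σ : zdgR (∀ i, F i) ≃g zdgR (∀ i, F i)} (hσ : ∀ v ∈ Sdet, σ v = v)
    (v : ZdvR (∀ i, F i)) (hsmall : ∀ i ∈ psupp v.1, ¬ 2 < Fintype.card (F i)) :
    psupp (σ v).1 ⊆ psupp v.1 := by
  obtain ⟨j, hj⟩ := hF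
  have hjv : j ∉ psupp v.1 := fun h => hsmall j h hj
  obtain ⟨hne, hnu⟩ := mem_zdv_iff.1 v.2
  have hC1 : (psupp v.1)ᶜ ≠ ∅ := Finset.ne_empty_of_mem (Finset.mem_compl.2 hjv)
  have hC2 : (psupp v.1)ᶜ ≠ Finset.univ := by
    intro h
    exact hne (by simpa using congrArg compl h)
  have key := (U1 hσ hC1 hC2 (Finset.mem_compl.2 hjv) hj v).2 (Finset.inter_compl _)
  intro i hi
  by_contra h
  have : i ∈ psupp (σ v).1 ∩ (psupp v.1)ᶜ :=
    Finset.mem_inter.2 ⟨hi, Finset.mem_compl.2 h⟩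
  rw [key] at this
  exact Finset.notMem_empty i this

lemma Ueq (hk : 2 ≤ k) (hF : ∃ i, 2 < Fintype.card (F i))
    {σ : zdgR (∀ i, F i) ≃g zdgR (∀ i, F i)} (hσ : ∀ v ∈ Sdet, σ v = v)
    (v : ZdvR (∀ i, F i)) : psupp (σ v).1 = psupp v.1 := by
  by_cases hbig : ∃ i ∈ psupp v.1, 2 < Fintype.card (F i)
  · obtain ⟨i, hi, hc⟩ := hbig
    exact U2 hk hσ v hi hc
  · have hsmall : ∀ i ∈ psupp v.1, ¬ 2 < Fintype.card (F i) := fun i hi hc => hbig ⟨i, hi, hc⟩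
    have hσ' : ∀ u ∈ Sdet, σ.symm u = u := fun u hu => by
      conv_lhs => rw [← hσ u hu]
      exact σ.symm_apply_apply u
    have h1 : psupp (σ v).1 ⊆ psupp v.1 := Uhalf hF hσ v hsmall
    have hsmall2 : ∀ i ∈ psupp (σ v).1, ¬ 2 < Fintype.card (F i) := fun i hi => hsmall i (h1 hi)
    have h2 := Uhalf hF hσ' (σ v) hsmall2
    rw [σ.symm_apply_apply] at h2
    exact Finset.Subset.antisymm h1 h2

lemma Sdet_determining (hk : 2 ≤ k) (hF : ∃ i, 2 < Fintype.card (F i)) :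
    IsDetermining (zdgR (∀ i, F i)) Sdet := by
  intro σ hσ v
  by_cases hv : v ∈ Sdet
  · exact hσ v hv
  · by_cases hw : σ v ∈ Sdet
    · have h1 : σ (σ v) = σ v := hσ _ hw
      exact σ.injective h1
    · apply Subtype.ext
      have h1 : (σ v).1 = eA (psupp (σ v).1) := not_not.1 hw
      have h2 : v.1 = eA (psupp v.1) := not_not.1 hv
      rw [h1, Ueq hk hF hσ v, ← h2]

lemma swap_iso (hk : 2 ≤ k) {x y : ZdvR (∀ i, F i)} (hxy : psupp x.1 = psupp y.1) :
    ∃ σ : zdgR (∀ i, F i) ≃g zdgR (∀ i, F i),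
      σ x = y ∧ ∀ v, v ≠ x → v ≠ y → σ v = v := by
  have hs : ∀ v : ZdvR (∀ i, F i), psupp ((Equiv.swap x y) v).1 = psupp v.1 := by
    intro v
    rcases eq_or_ne v x with rfl | hvx
    · rw [Equiv.swap_apply_left]; exact hxy.symm
    rcases eq_or_ne v y with rfl | hvy
    · rw [Equiv.swap_apply_right]; exact hxy
    · rw [Equiv.swap_apply_of_ne_of_ne hvx hvy]
  exact ⟨{ toEquiv := Equiv.swap x y,
           map_rel_iff' := fun {a b} => by rw [adj_iff, adj_iff]; show psupp _ ∩ psupp _ = ∅ ↔ _; rw [hs, hs] },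
    Equiv.swap_apply_left x y, fun v h1 h2 => Equiv.swap_apply_of_ne_of_ne h1 h2⟩

lemma good_ncard (hk : 2 ≤ k) :
    {A : Finset (Fin k) | A ≠ ∅ ∧ A ≠ Finset.univ}.ncard = 2 ^ k - 2 := by
  have hne : Nonempty (Fin k) := ⟨⟨0, by omega⟩⟩
  have hco : {A : Finset (Fin k) | A ≠ ∅ ∧ A ≠ Finset.univ}ᶜ
      = {(∅ : Finset (Fin k)), Finset.univ} := by
    ext A
    simp only [Set.mem_compl_iff, Set.mem_setOf_eq, not_and_or, not_not, Set.mem_insert_iff,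
      Set.mem_singleton_iff]
  have hcard2 : ({(∅ : Finset (Fin k)), Finset.univ} : Set (Finset (Fin k))).ncard = 2 :=
    Set.ncard_pair (by
      intro h
      exact (Finset.univ_nonempty (α := Fin k)).ne_empty h.symm)
  have hsum := Set.ncard_add_ncard_compl {A : Finset (Fin k) | A ≠ ∅ ∧ A ≠ Finset.univ}
  rw [hco, hcard2, Nat.card_eq_fintype_card, Fintype.card_finset, Fintype.card_fin] at hsum
  have h2k : 2 ≤ 2 ^ k := by
    calc 2 = 2 ^ 1 := rfl
    _ ≤ 2 ^ k := Nat.pow_le_pow_right (by norm_num) (by omega)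
  omega

lemma eA_inj : Function.Injective (eA (F := F)) := by
  intro A B h
  rw [← psupp_eA (F := F) A, ← psupp_eA (F := F) B, h]

lemma Sdet_compl_image :
    Subtype.val '' (Sdet (F := F))ᶜ = eA '' {A : Finset (Fin k) | A ≠ ∅ ∧ A ≠ Finset.univ} := by
  ext x
  constructor
  · rintro ⟨v, hv, rfl⟩
    have h1 : v.1 = eA (psupp v.1) := not_not.1 hv
    obtain ⟨hne, hnu⟩ := mem_zdv_iff.1 v.2
    exact ⟨psupp v.1, ⟨hne, hnu⟩, h1.symm⟩
  · rintro ⟨A, ⟨hne, hnu⟩, rfl⟩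
    have hmem : eA A ∈ zdvSet (∀ i, F i) :=
      mem_zdv_iff.2 ⟨by rw [psupp_eA]; exact hne, by rw [psupp_eA]; exact hnu⟩
    refine ⟨⟨eA A, hmem⟩, ?_, rfl⟩
    intro h
    exact h (by show eA A = eA (psupp (eA A)); rw [psupp_eA])

lemma Sdet_compl_ncard (hk : 2 ≤ k) : ((Sdet (F := F))ᶜ).ncard = 2 ^ k - 2 := by
  have h1 := Set.ncard_image_of_injective ((Sdet (F := F))ᶜ) Subtype.val_injective
  rw [Sdet_compl_image, Set.ncard_image_of_injective _ eA_inj, good_ncard hk] at h1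
  exact h1.symm

lemma lower_bound (hk : 2 ≤ k) {S : Set (ZdvR (∀ i, F i))}
    (hS : IsDetermining (zdgR (∀ i, F i)) S) : Sᶜ.ncard ≤ 2 ^ k - 2 := by
  have hinj : Set.InjOn (fun v : ZdvR (∀ i, F i) => psupp v.1) Sᶜ := by
    intro x hx y hy hxy
    by_contra hne
    obtain ⟨σ, hσx, hσfix⟩ := swap_iso hk hxy
    have hfix : ∀ v ∈ S, σ v = v := fun v hv =>
      hσfix v (fun h => hx (h ▸ hv)) (fun h => hy (h ▸ hv))
    have := hS σ hfix x
    rw [hσx] at this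
    exact hne this.symm
  have h1 : ((fun v : ZdvR (∀ i, F i) => psupp v.1) '' Sᶜ).ncard = Sᶜ.ncard :=
    Set.ncard_image_of_injOn hinj
  rw [← h1, ← good_ncard (k := k) hk]
  apply Set.ncard_le_ncard _ (Set.toFinite _)
  rintro A ⟨v, -, rfl⟩
  exact mem_zdv_iff.1 v.2

end Aux

theorem detNum_semisimple {k : ℕ} (hk : 2 ≤ k) (F : Fin k → Type*)
    [∀ i, Field (F i)] [∀ i, Fintype (F i)]
    (hF : ∃ i, 2 < Fintype.card (F i)) :
    detNum (zdgR (∀ i, F i)) = (zdvSet (∀ i, F i)).ncard + 2 - 2 ^ k := by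
  have hcardV : Nat.card (ZdvR (∀ i, F i)) = (zdvSet (∀ i, F i)).ncard :=
    Nat.card_coe_set_eq _
  have h2k : 2 ≤ 2 ^ k := by
    calc 2 = 2 ^ 1 := rfl
    _ ≤ 2 ^ k := Nat.pow_le_pow_right (by norm_num) (by omega)
  have hdet := Sdet_determining (F := F) hk hF
  have hSc := Sdet_compl_ncard (F := F) hk
  have hsum := Set.ncard_add_ncard_compl (Sdet (F := F))
  rw [hcardV, hSc] at hsum
  have hval : (Sdet (F := F)).ncard = (zdvSet (∀ i, F i)).ncard + 2 - 2 ^ k := by omega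
  apply le_antisymm
  · exact Nat.sInf_le ⟨Sdet, Set.toFinite _, hval, hdet⟩
  · refine le_csInf ⟨_, Sdet, Set.toFinite _, rfl, hdet⟩ ?_
    rintro m ⟨S, hfin, rfl, hSdet⟩
    have hle := lower_bound hk hSdet
    have hsum' := Set.ncard_add_ncard_compl S
    rw [hcardV] at hsum'
    omega
end

section
/- Let R be an infinite commutative ring that is not an integral domain. If the compressed zero-divisor graph Γ_E(R) has finitely many vertices, then the zero-divisor graph Γ(R) has no finite determining set. -/
namespace SimpleGraph

variable {V W : Type*} {r : V → V → Prop} {s : W → W → Prop}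

def fromRelIsoOfEquiv (e : V ≃ W) (he : ∀ x y, s (e x) (e y) ↔ r x y) :
    fromRel r ≃g fromRel s where
  toEquiv := e
  map_rel_iff' {x y} := by
    simp only [fromRel_adj, he, e.injective.ne_iff]

end SimpleGraph

theorem exists_mul_eq_zero_of_not_isDomain {R : Type*} [Ring R] [Nontrivial R]
    (hR : ¬ IsDomain R) : ∃ a : R, a ≠ 0 ∧ ∃ b : R, a * b = 0 ∧ b ≠ 0 := by
  have hzd : ¬ NoZeroDivisors R := fun h =>
    hR ((isDomain_iff_noZeroDivisors_and_nontrivial R).mpr ⟨h, ‹_›⟩)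
  rw [noZeroDivisors_iff_right_eq_zero_of_mul] at hzd
  push Not at hzd
  exact hzd

section ZeroDivisorGraph

variable {R : Type*} [CommRing R]

theorem infinite_zdvSet_of_mul_eq_zero [Infinite R] {a b : R} (ha : a ≠ 0) (hb : b ≠ 0)
    (hab : a * b = 0) : (zdvSet R).Infinite := by
  have hker_or_range : (AddMonoidHom.mulLeft a).ker.carrier.Infinite ∨
      (AddMonoidHom.mulLeft a).range.carrier.Infinite := by
    by_contra! h
    have := (AddMonoidHom.mulLeft a).finite_iff_finite_ker_range.mpr
      ⟨h.1.to_subtype, h.2.to_subtype⟩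
    exact not_finite R
  rcases hker_or_range with hker | hrange
  · refine (hker.sdiff (Set.finite_singleton 0)).mono ?_
    rintro w ⟨hw, hw0⟩
    exact ⟨hw0, a, ha, by rw [mul_comm]; exact hw⟩
  · refine (hrange.sdiff (Set.finite_singleton 0)).mono ?_
    rintro _ ⟨⟨r, rfl⟩, hr0⟩
    exact ⟨hr0, b, hb, by rw [AddMonoidHom.coe_mulLeft, mul_right_comm, hab, zero_mul]⟩

open scoped Classical in
noncomputable def zdgR.swapOfAnnEq (u v : ZdvR R)
    (h : {w : R | u.1 * w = 0} = {w : R | v.1 * w = 0}) : zdgR R ≃g zdgR R :=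
  SimpleGraph.fromRelIsoOfEquiv (Equiv.swap u v) fun x y => by
    have hann (z : ZdvR R) (w : R) : (Equiv.swap u v z).1 * w = 0 ↔ z.1 * w = 0 :=
      Set.ext_iff.mp
        (Equiv.apply_swap_eq_self (v := fun z : ZdvR R => {w : R | z.1 * w = 0}) h z) w
    rw [hann, mul_comm, hann, mul_comm]

open scoped Classical in
@[simp]
theorem zdgR.swapOfAnnEq_apply (u v : ZdvR R)
    (h : {w : R | u.1 * w = 0} = {w : R | v.1 * w = 0}) (x : ZdvR R) :
    zdgR.swapOfAnnEq u v h x = Equiv.swap u v x :=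
  rfl

end ZeroDivisorGraph

theorem no_finite_determining_set (R : Type*) [CommRing R] [Infinite R]
    (hd : ¬ IsDomain R)
    (hfin : (Set.range fun x : ZdvR R => {w : R | x.1 * w = 0}).Finite) :
    ∀ S : Set (ZdvR R), S.Finite → ¬ IsDetermining (zdgR R) S := by
  classical
  intro S hS hdet
  obtain ⟨a, ha, b, hab, hb⟩ := exists_mul_eq_zero_of_not_isDomain hd
  have : Infinite (ZdvR R) := (infinite_zdvSet_of_mul_eq_zero ha hb hab).to_subtype
  obtain ⟨u, hu, v, hv, huv, hann⟩ :=
    hS.infinite_compl.exists_ne_map_eq_of_mapsTo (Set.mapsTo_range _ _) hfin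
  have hfix : ∀ x ∈ S, zdgR.swapOfAnnEq u v hann x = x := fun x hx =>
    Equiv.swap_apply_of_ne_of_ne (ne_of_mem_of_not_mem hx hu) (ne_of_mem_of_not_mem hx hv)
  apply huv
  simpa using (hdet _ hfix u).symm
end

section
/- Suppose Γ ≅ Λ[Λ_1,...,Λ_k] is a generalized join where each Λ_i is vertex-transitive and the vertex sets V(Λ_i)† = {(i, v) : v ∈ V(Λ_i)} are exactly the vertex orbits of Γ. Then Det(Γ) = Σ_{i=1}^k Det(Λ_i). -/
/-- The generalized join `Λ[Λ₁,...,Λₖ]`: vertices `(i, y)` with `y ∈ V(Λᵢ)`;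
`(i,y) ~ (i',y')` iff `i = i'` and `y ~ y'` in `Λᵢ`, or `i ≠ i'` and `i ~ i'` in `Λ`. -/
def genJoin {ι : Type*} {V : ι → Type*} (Λ : SimpleGraph ι) (F : ∀ i, SimpleGraph (V i)) :
    SimpleGraph (Σ i, V i) :=
  SimpleGraph.fromRel (fun x y =>
    (∃ h : x.1 = y.1, (F y.1).Adj (h ▸ x.2) y.2) ∨ (x.1 ≠ y.1 ∧ Λ.Adj x.1 y.1))

section Aux

variable {k : ℕ} {V : Fin k → Type*} [∀ i, Fintype (V i)]
  {Λ : SimpleGraph (Fin k)} {F : ∀ i, SimpleGraph (V i)}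

lemma sigma_snd_eq {i : Fin k} (p : Σ j, V j) (h : p.1 = i) :
    (⟨i, h ▸ p.2⟩ : Σ j, V j) = p := by
  cases p; subst h; rfl

lemma genJoin_adj_same {i : Fin k} {x y : V i} :
    (genJoin Λ F).Adj ⟨i, x⟩ ⟨i, y⟩ ↔ (F i).Adj x y := by
  simp only [genJoin, SimpleGraph.fromRel_adj]
  constructor
  · rintro ⟨hne, (⟨-, hadj⟩ | ⟨h, -⟩) | (⟨-, hadj⟩ | ⟨h, -⟩)⟩
    · exact hadj
    · exact absurd rfl h
    · exact hadj.symm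
    · exact absurd rfl h
  · intro h
    refine ⟨?_, Or.inl (Or.inl ⟨trivial, h⟩)⟩
    simpa using h.ne

lemma genJoin_adj_ne {a b : Fin k} (hab : a ≠ b) {x : V a} {y : V b} :
    (genJoin Λ F).Adj ⟨a, x⟩ ⟨b, y⟩ ↔ Λ.Adj a b := by
  simp only [genJoin, SimpleGraph.fromRel_adj]
  constructor
  · rintro ⟨-, (⟨h, -⟩ | ⟨-, h⟩) | (⟨h, -⟩ | ⟨-, h⟩)⟩
    · exact absurd h hab
    · exact h
    · exact absurd h.symm hab
    · exact h.symm
  · intro h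
    refine ⟨?_, Or.inl (Or.inr ⟨hab, h⟩)⟩
    intro he; exact hab (congrArg Sigma.fst he)

variable (σ : genJoin Λ F ≃g genJoin Λ F)

def fiberMap (hfib : ∀ (i : Fin k) (x : V i), (σ ⟨i, x⟩).1 = i) (i : Fin k) (x : V i) : V i :=
  (hfib i x) ▸ (σ ⟨i, x⟩).2

lemma mk_fiberMap (hfib : ∀ (i : Fin k) (x : V i), (σ ⟨i, x⟩).1 = i) (i : Fin k) (x : V i) :
    (⟨i, fiberMap σ hfib i x⟩ : Σ j, V j) = σ ⟨i, x⟩ :=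
  sigma_snd_eq _ _

noncomputable def fiberIso (hfib : ∀ (i : Fin k) (x : V i), (σ ⟨i, x⟩).1 = i) (i : Fin k) :
    F i ≃g F i where
  toEquiv := Equiv.ofBijective (fiberMap σ hfib i) <| by
    rw [← Finite.injective_iff_bijective]
    intro x y h
    have : σ ⟨i, x⟩ = σ ⟨i, y⟩ := by
      rw [← mk_fiberMap σ hfib i x, ← mk_fiberMap σ hfib i y, h]
    exact sigma_mk_injective (σ.injective this)
  map_rel_iff' := by
    intro a b
    show (F i).Adj (fiberMap σ hfib i a) (fiberMap σ hfib i b) ↔ (F i).Adj a b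
    rw [← genJoin_adj_same (Λ := Λ), mk_fiberMap, mk_fiberMap, σ.map_adj_iff,
      genJoin_adj_same]

def extEquiv (i : Fin k) (τ : V i ≃ V i) : ∀ j, V j ≃ V j := fun j =>
  if h : j = i then
    (Equiv.cast (congrArg V h)).trans (τ.trans (Equiv.cast (congrArg V h.symm)))
  else Equiv.refl _

def extIso (i : Fin k) (τ : F i ≃g F i) : genJoin Λ F ≃g genJoin Λ F where
  toEquiv := Equiv.sigmaCongrRight (extEquiv i τ.toEquiv)
  map_rel_iff' := by
    rintro ⟨a, x⟩ ⟨b, y⟩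
    show (genJoin Λ F).Adj ⟨a, extEquiv i τ.toEquiv a x⟩ ⟨b, extEquiv i τ.toEquiv b y⟩ ↔ _
    by_cases hab : a = b
    · subst hab
      rw [genJoin_adj_same, genJoin_adj_same]
      by_cases ha : a = i
      · subst ha
        simp only [extEquiv, dif_pos rfl]
        simpa using τ.map_rel_iff
      · simp [extEquiv, dif_neg ha]
    · rw [genJoin_adj_ne hab, genJoin_adj_ne hab]

lemma extIso_apply_same (i : Fin k) (τ : F i ≃g F i) (x : V i) :
    extIso (Λ := Λ) i τ ⟨i, x⟩ = ⟨i, τ x⟩ := by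
  show (⟨i, extEquiv i τ.toEquiv i x⟩ : Σ j, V j) = _
  simp [extEquiv]

lemma extIso_apply_ne (i : Fin k) (τ : F i ≃g F i) {j : Fin k} (hj : j ≠ i) (x : V j) :
    extIso (Λ := Λ) i τ ⟨j, x⟩ = ⟨j, x⟩ := by
  show (⟨j, extEquiv i τ.toEquiv j x⟩ : Σ j, V j) = _
  simp [extEquiv, dif_neg hj]

lemma mem_sigmaUnion (A : ∀ i, Set (V i)) (p : Σ j, V j) :
    p ∈ ⋃ i, Sigma.mk i '' A i ↔ p.2 ∈ A p.1 := by
  constructor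
  · intro hmem
    rw [Set.mem_iUnion] at hmem
    obtain ⟨i, y, hy, rfl⟩ := hmem
    exact hy
  · intro h
    exact Set.mem_iUnion.2 ⟨p.1, ⟨p.2, h, rfl⟩⟩

lemma ncard_sigmaUnion (A : ∀ i, Set (V i)) :
    (⋃ i, Sigma.mk i '' A i).ncard = ∑ i, (A i).ncard := by
  have e : (⋃ i, Sigma.mk i '' A i) ≃ (Σ i, A i) :=
    { toFun := fun p => ⟨p.1.1, ⟨p.1.2, (mem_sigmaUnion A p.1).1 p.2⟩⟩
      invFun := fun q => ⟨⟨q.1, q.2.1⟩, (mem_sigmaUnion A _).2 q.2.2⟩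
      left_inv := fun p => Subtype.ext rfl
      right_inv := fun q => rfl }
  classical
  haveI : ∀ i, Fintype (A i) := fun i => (A i).toFinite.fintype
  rw [← Nat.card_coe_set_eq, Nat.card_congr e, Nat.card_eq_fintype_card,
    Fintype.card_sigma]
  refine Finset.sum_congr rfl (fun i _ => ?_)
  rw [← Nat.card_coe_set_eq, Nat.card_eq_fintype_card]

end Aux

theorem detNum_genJoin_of_vertexTransitive {k : ℕ} {V : Fin k → Type*}
    [∀ i, Fintype (V i)] (Λ : SimpleGraph (Fin k)) (F : ∀ i, SimpleGraph (V i))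
    (htrans : ∀ i, ∀ u v : V i, ∃ σ : F i ≃g F i, σ u = v)
    (horb : ∀ (i : Fin k) (x : V i) (y : Σ j, V j),
      (∃ σ : genJoin Λ F ≃g genJoin Λ F, σ ⟨i, x⟩ = y) ↔ y.1 = i) :
    detNum (genJoin Λ F) = ∑ i, detNum (F i) := by
  classical
  have hfib : ∀ (σ : genJoin Λ F ≃g genJoin Λ F) (i : Fin k) (x : V i),
      (σ ⟨i, x⟩).1 = i := fun σ i x => (horb i x (σ ⟨i, x⟩)).1 ⟨σ, rfl⟩
  -- each F i has a determining set realizing its determining number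
  have hmem : ∀ i : Fin k, ∃ S : Set (V i), S.Finite ∧ S.ncard = detNum (F i) ∧
      IsDetermining (F i) S := by
    intro i
    have : detNum (F i) ∈ {m | ∃ S : Set (V i), S.Finite ∧ S.ncard = m ∧
        IsDetermining (F i) S} :=
      Nat.sInf_mem ⟨(Set.univ : Set (V i)).ncard, Set.univ, Set.finite_univ, rfl,
        fun σ h v => h v (Set.mem_univ v)⟩
    exact this
  choose S hSfin hScard hSdet using hmem
  refine le_antisymm ?_ ?_
  · -- detNum Γ ≤ ∑
    apply Nat.sInf_le
    refine ⟨⋃ i, Sigma.mk i '' S i, Set.toFinite _, ?_, ?_⟩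
    · rw [ncard_sigmaUnion]
      exact Finset.sum_congr rfl fun i _ => hScard i
    · intro σ hfix p
      obtain ⟨i, x⟩ := p
      have hfi : ∀ y ∈ S i, fiberIso σ (hfib σ) i y = y := by
        intro y hy
        have h1 : σ ⟨i, y⟩ = ⟨i, y⟩ :=
          hfix _ ((mem_sigmaUnion S ⟨i, y⟩).2 hy)
        apply sigma_mk_injective (i := i)
        show (⟨i, fiberMap σ (hfib σ) i y⟩ : Σ j, V j) = ⟨i, y⟩
        rw [mk_fiberMap]; exact h1
      have hx := hSdet i (fiberIso σ (hfib σ) i) hfi x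
      rw [← mk_fiberMap σ (hfib σ) i x]
      exact congrArg (Sigma.mk i) hx
  · -- ∑ ≤ detNum Γ
    apply le_csInf
    · exact ⟨(Set.univ : Set (Σ j, V j)).ncard, Set.univ, Set.finite_univ, rfl,
        fun σ h v => h v (Set.mem_univ v)⟩
    rintro m ⟨T, hTfin, hTcard, hTdet⟩
    set A : ∀ i, Set (V i) := fun i => Sigma.mk i ⁻¹' T with hA
    have hAdet : ∀ i, IsDetermining (F i) (A i) := by
      intro i τ hfixτ x
      have hfixT : ∀ v ∈ T, extIso (Λ := Λ) i τ v = v := by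
        rintro ⟨j, y⟩ hv
        by_cases hj : j = i
        · subst hj
          rw [extIso_apply_same]
          exact congrArg (Sigma.mk j) (hfixτ y hv)
        · exact extIso_apply_ne i τ hj y
      have h2 := hTdet (extIso (Λ := Λ) i τ) hfixT ⟨i, x⟩
      rw [extIso_apply_same] at h2
      exact sigma_mk_injective h2
    have hTcover : T = ⋃ i, Sigma.mk i '' A i := by
      ext ⟨j, y⟩
      rw [mem_sigmaUnion]
      exact Iff.rfl
    calc ∑ i, detNum (F i) ≤ ∑ i, (A i).ncard :=
          Finset.sum_le_sum fun i _ => Nat.sInf_le ⟨A i, Set.toFinite _, rfl, hAdet i⟩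
      _ = T.ncard := by rw [hTcover, ncard_sigmaUnion]
      _ = m := hTcard
end
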